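/- arXiv:2605.19078 — 10 statements merged into one kernel-verified Lean document; each statement's English description precedes it below -/
import Mathlib

section
/- Let G = (V,E) be a finite simple graph, let t ≥ 0 be a natural number and ε ∈ [0,1] a real number. Suppose C_1, …, C_k is an ordered partition of V into nonempty clusters that has ε-cluster-degeneracy and such that every cluster C_i has weak diameter at most t. Define X = ⋃_{i=1}^{k} { v ∈ C_i : dist_G(v, V \ (C_1 ∪ … ∪ C_i)) ≤ 2 }. Then the pair ({C_1,…,C_k}, X) is a (t,ε)-Two-Separated partition of G. Moreover, if every cluster C_i induces a connected subgraph of G, then this Two-Separated partition is connected (all its clusters are connected). -/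
open SimpleGraph

variable {V : Type*}

/-- The ball of radius `j` (w.r.t. the shortest-path distance in `G`) around `v`. -/
def sball (G : SimpleGraph V) (v : V) (j : ℕ) : Set V := {u | G.edist v u ≤ (j : ℕ∞)}

/-- The set of "close-to-boundary" vertices of the `i`-th cluster of an ordered partition:
vertices of `C i` at distance at most `2` from `V \ (C 1 ∪ … ∪ C i)`. -/
def closeSet (G : SimpleGraph V) {k : ℕ} (C : Fin k → Set V) (i : Fin k) : Set V :=
  {v ∈ C i | ∃ u : V, (∀ j : Fin k, j ≤ i → u ∉ C j) ∧ G.edist v u ≤ (2 : ℕ∞)}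

/-- A `(t,ε)`-Two-Separated partition of `G`: `𝒞` is a partition of the vertex set,
every walk between vertices of `C \ X` and `C' \ X` for distinct clusters `C, C'` has two
consecutive vertices in `X`, every cluster has weak diameter at most `t`, and every cluster
satisfies the cost-ratio bound `|C ∩ X| ≤ ε·|C|`. -/
def IsTSPartition (G : SimpleGraph V) (t : ℕ) (ε : ℝ) (𝒞 : Set (Set V)) (X : Set V) : Prop :=
  Setoid.IsPartition 𝒞 ∧
  (∀ C ∈ 𝒞, ∀ D ∈ 𝒞, C ≠ D → ∀ a b : V, a ∈ C \ X → b ∈ D \ X →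
    ∀ w : G.Walk a b, ∃ i : ℕ, i < w.length ∧ w.getVert i ∈ X ∧ w.getVert (i + 1) ∈ X) ∧
  (∀ C ∈ 𝒞, ∀ u ∈ C, ∀ v ∈ C, G.edist u v ≤ (t : ℕ∞)) ∧
  (∀ C ∈ 𝒞, ((C ∩ X).ncard : ℝ) ≤ ε * (C.ncard : ℝ))

private lemma key_lemma {k : ℕ} (G : SimpleGraph V) (C : Fin k → Set V) (i : Fin k) {a b : V}
    (ha : a ∈ C i) (haX : a ∉ ⋃ j, closeSet G C j)
    (hb : ∀ ℓ : Fin k, ℓ ≤ i → b ∉ C ℓ) (w : G.Walk a b) :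
    ∃ p : ℕ, p < w.length ∧ w.getVert p ∈ ⋃ j, closeSet G C j ∧
      w.getVert (p + 1) ∈ ⋃ j, closeSet G C j := by
  classical
  have hQex : ∃ p : ℕ, ∀ ℓ : Fin k, ℓ ≤ i → w.getVert p ∉ C ℓ := by
    refine ⟨w.length, ?_⟩
    simpa [SimpleGraph.Walk.getVert_length] using hb
  obtain ⟨p, hpspec, hpmin⟩ : ∃ p : ℕ, (∀ ℓ : Fin k, ℓ ≤ i → w.getVert p ∉ C ℓ) ∧
      ∀ q, q < p → ∃ ℓ : Fin k, ℓ ≤ i ∧ w.getVert q ∈ C ℓ :=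
    ⟨Nat.find hQex, Nat.find_spec hQex, fun q hq => by
      have := Nat.find_min hQex hq
      push_neg at this
      obtain ⟨ℓ, h1, h2⟩ := this
      exact ⟨ℓ, h1, h2⟩⟩
  have hpL : p ≤ w.length := by
    by_contra hc
    obtain ⟨ℓ, hℓ, hmem⟩ := hpmin w.length (by omega)
    rw [SimpleGraph.Walk.getVert_length] at hmem
    exact hb ℓ hℓ hmem
  have sub : ∀ v : V, (∃ ℓ : Fin k, ℓ ≤ i ∧ v ∈ C ℓ) → G.edist v (w.getVert p) ≤ 2 →
      v ∈ ⋃ j, closeSet G C j := by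
    rintro v ⟨ℓ, hℓi, hv⟩ h2
    exact Set.mem_iUnion.mpr ⟨ℓ, hv, w.getVert p, fun m hm => hpspec m (hm.trans hℓi), h2⟩
  have adj_edist : ∀ q : ℕ, q < w.length → G.edist (w.getVert q) (w.getVert (q + 1)) ≤ 1 := by
    intro q hq
    exact (SimpleGraph.edist_eq_one_iff_adj.mpr (w.adj_getVert_succ hq)).le
  have hp0 : p ≠ 0 := by
    intro h0
    have := hpspec i le_rfl
    rw [h0] at this
    simp only [SimpleGraph.Walk.getVert_zero] at this
    exact this ha
  have hp1 : p ≠ 1 := by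
    intro h1
    apply haX
    have h0L : 0 < w.length := by omega
    have := adj_edist 0 h0L
    rw [SimpleGraph.Walk.getVert_zero] at this
    exact sub a ⟨i, le_rfl, ha⟩ (by rw [h1]; exact this.trans (by norm_num))
  obtain ⟨m, hm⟩ : ∃ m, p = m + 2 := ⟨p - 2, by omega⟩
  subst hm
  have hmS := hpmin m (by omega)
  have hm1S := hpmin (m + 1) (by omega)
  have hmL : m < w.length := by omega
  have hm1L : m + 1 < w.length := by omega
  have e1 := adj_edist m hmL
  have e2 := adj_edist (m + 1) hm1L
  have e3 : G.edist (w.getVert m) (w.getVert (m + 2)) ≤ 2 := by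
    calc G.edist (w.getVert m) (w.getVert (m + 2))
        ≤ G.edist (w.getVert m) (w.getVert (m + 1)) +
          G.edist (w.getVert (m + 1)) (w.getVert (m + 2)) := SimpleGraph.edist_triangle
      _ ≤ 1 + 1 := add_le_add e1 e2
      _ = 2 := by norm_num
  exact ⟨m, hmL, sub _ hmS e3, sub _ hm1S (e2.trans (by norm_num))⟩

theorem stmt0 [Fintype V] (G : SimpleGraph V) (t : ℕ) (ε : ℝ) (hε0 : 0 ≤ ε) (hε1 : ε ≤ 1)
    (k : ℕ) (C : Fin k → Set V)
    (hne : ∀ i, (C i).Nonempty)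
    (hdisj : Pairwise (Function.onFun Disjoint C))
    (hcov : (⋃ i, C i) = Set.univ)
    (hdiam : ∀ i, ∀ u ∈ C i, ∀ v ∈ C i, G.edist u v ≤ (t : ℕ∞))
    (hdeg : ∀ i, ((closeSet G C i).ncard : ℝ) ≤ ε * ((C i).ncard : ℝ)) :
    IsTSPartition G t ε (Set.range C) (⋃ i, closeSet G C i) ∧
      ((∀ i, (G.induce (C i)).Connected) →
        ∀ D ∈ Set.range C, (G.induce D).Connected) := by
  classical
  set X := ⋃ j, closeSet G C j with hX
  have hmemne : ∀ {i j : Fin k} {v : V}, v ∈ C i → v ∈ C j → i = j := by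
    intro i j v hi hj
    by_contra hij
    exact Set.disjoint_left.mp (hdisj hij) hi hj
  refine ⟨⟨?_, ?_, ?_, ?_⟩, ?_⟩
  · -- partition
    constructor
    · rintro ⟨i, hi⟩
      exact (hne i).ne_empty hi
    · intro v
      have hv : v ∈ ⋃ i, C i := by rw [hcov]; trivial
      obtain ⟨i, hi⟩ := Set.mem_iUnion.mp hv
      refine ⟨C i, ⟨⟨i, rfl⟩, hi⟩, ?_⟩
      rintro D ⟨⟨j, rfl⟩, hvD⟩
      rw [hmemne hvD hi]
  · -- two separation
    rintro _ ⟨i, rfl⟩ _ ⟨j, rfl⟩ hne' a b ⟨ha, haX⟩ ⟨hb, hbX⟩ w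
    have hij : i ≠ j := fun h => hne' (by rw [h])
    rcases lt_or_gt_of_ne hij with h | h
    · refine key_lemma G C i ha haX (fun ℓ hℓ hbℓ => ?_) w
      have hej : ℓ = j := hmemne hbℓ hb
      rw [hej] at hℓ
      exact absurd h (not_lt.mpr hℓ)
    · obtain ⟨p, hpL, hp1, hp2⟩ := key_lemma G C j hb hbX (fun ℓ hℓ haℓ => by
        have hei : ℓ = i := hmemne haℓ ha
        rw [hei] at hℓ
        exact absurd h (not_lt.mpr hℓ)) w.reverse
      rw [SimpleGraph.Walk.length_reverse] at hpL
      rw [SimpleGraph.Walk.getVert_reverse] at hp1 hp2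
      refine ⟨w.length - p - 1, by omega, ?_, ?_⟩
      · have he : w.length - p - 1 = w.length - (p + 1) := by omega
        rw [he]; exact hp2
      · have he : w.length - p - 1 + 1 = w.length - p := by omega
        rw [he]; exact hp1
  · -- diameter
    rintro _ ⟨i, rfl⟩ u hu v hv
    exact hdiam i u hu v hv
  · -- cost
    rintro _ ⟨i, rfl⟩
    have : C i ∩ X = closeSet G C i := by
      apply Set.Subset.antisymm
      · rintro v ⟨hvi, hvX⟩
        obtain ⟨j, hj⟩ := Set.mem_iUnion.mp hvX
        have hvj : v ∈ C j := hj.1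
        rwa [hmemne hvi hvj]
      · intro v hv
        exact ⟨hv.1, Set.mem_iUnion.mpr ⟨i, hv⟩⟩
    rw [this]
    exact hdeg i
  · -- connectedness
    rintro hconn _ ⟨i, rfl⟩
    exact hconn i
end

section
/- Let G = (V,E) be a finite simple graph, let t ≥ 1 be an integer, let v ∈ V, let L ⊆ V, and let r ≥ 2 be an integer. Set C = B_r(v) ∩ L. If |B_r(v) ∩ L| ≤ (1 + 1/t)·|B_{r−2}(v) ∩ L|, then |C ∩ B_2(L \ C)| ≤ |C| / t. -/
open SimpleGraph

variable {V : Type*}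

/-- The ball of radius `j` around a set `S` of vertices. -/
def setBall (G : SimpleGraph V) (S : Set V) (j : ℕ) : Set V :=
  {u | ∃ w ∈ S, G.edist w u ≤ (j : ℕ∞)}

/-! By the triangle inequality, a vertex of `C = B_r(v) ∩ L` within distance 2 of `L \ C` lies
outside `B_{r-2}(v)`. So there are at most `|C| - |B_{r-2}(v) ∩ L|` such vertices, and the
hypothesis bounds this difference by `|B_{r-2}(v) ∩ L| / t ≤ |C| / t`. -/

lemma sball_mono (G : SimpleGraph V) (v : V) {i j : ℕ} (hij : i ≤ j) :
    sball G v i ⊆ sball G v j :=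
  fun _ (hu : G.edist v _ ≤ i) => hu.trans (by exact_mod_cast hij)

lemma setBall_mono (G : SimpleGraph V) {S T : Set V} (hST : S ⊆ T) (j : ℕ) :
    setBall G S j ⊆ setBall G T j :=
  fun _ ⟨w, hw, hwu⟩ => ⟨w, hST hw, hwu⟩

lemma disjoint_sball_setBall_compl (G : SimpleGraph V) (v : V) (i k : ℕ) :
    Disjoint (sball G v i) (setBall G (sball G v (i + k))ᶜ k) := by
  rw [Set.disjoint_left]
  rintro u (hu : G.edist v u ≤ i) ⟨w, hw, hwu⟩
  apply hw
  calc G.edist v w ≤ G.edist v u + G.edist u w := G.edist_triangle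
    _ ≤ i + k := add_le_add hu (by rwa [edist_comm])
    _ = (i + k : ℕ) := by push_cast; rfl

lemma ncard_le_ncard_div_of_subset_diff {α : Type*} {A C X : Set α} (hC : C.Finite)
    (hAC : A ⊆ C) (hXCA : X ⊆ C \ A) {t : ℝ} (ht : 0 ≤ t)
    (h : (C.ncard : ℝ) ≤ (1 + 1 / t) * A.ncard) :
    (X.ncard : ℝ) ≤ C.ncard / t := by
  have hAC_card : A.ncard ≤ C.ncard := Set.ncard_le_ncard hAC hC
  have hX : (X.ncard : ℝ) ≤ C.ncard - A.ncard := by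
    rw [← Nat.cast_sub hAC_card, ← Set.ncard_sdiff hAC (hC.subset hAC)]
    exact_mod_cast Set.ncard_le_ncard hXCA hC.sdiff
  calc (X.ncard : ℝ) ≤ C.ncard - A.ncard := hX
    _ ≤ A.ncard / t := by linarith [show (1 + 1 / t) * A.ncard = A.ncard + A.ncard / t by ring]
    _ ≤ C.ncard / t := by gcongr

theorem stmt4_general [Fintype V] (G : SimpleGraph V) (t : ℕ) (v : V) (L : Set V)
    (r : ℕ) (hr : 2 ≤ r)
    (h : ((sball G v r ∩ L).ncard : ℝ)
        ≤ (1 + 1 / (t : ℝ)) * ((sball G v (r - 2) ∩ L).ncard : ℝ)) :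
    (((sball G v r ∩ L) ∩ setBall G (L \ (sball G v r ∩ L)) 2).ncard : ℝ)
      ≤ ((sball G v r ∩ L).ncard : ℝ) / (t : ℝ) := by
  have hAC : sball G v (r - 2) ∩ L ⊆ sball G v r ∩ L :=
    Set.inter_subset_inter_left L (sball_mono G v (Nat.sub_le r 2))
  refine ncard_le_ncard_div_of_subset_diff (Set.toFinite _) hAC ?_ t.cast_nonneg h
  rintro u ⟨huC, huX⟩
  refine ⟨huC, fun huA => ?_⟩
  have hdisj := disjoint_sball_setBall_compl G v (r - 2) 2
  rw [Nat.sub_add_cancel hr] at hdisj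
  have hL_compl : L \ (sball G v r ∩ L) ⊆ (sball G v r)ᶜ := fun w hw hwr => hw.2 ⟨hwr, hw.1⟩
  exact Set.disjoint_left.mp hdisj huA.1 (setBall_mono G hL_compl 2 huX)

theorem stmt4 [Fintype V] (G : SimpleGraph V) (t : ℕ) (ht : 1 ≤ t) (v : V) (L : Set V)
    (r : ℕ) (hr : 2 ≤ r)
    (h : ((sball G v r ∩ L).ncard : ℝ)
        ≤ (1 + 1 / (t : ℝ)) * ((sball G v (r - 2) ∩ L).ncard : ℝ)) :
    (((sball G v r ∩ L) ∩ setBall G (L \ (sball G v r ∩ L)) 2).ncard : ℝ)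
      ≤ ((sball G v r ∩ L).ncard : ℝ) / (t : ℝ) :=
  stmt4_general G t v L r hr h
end

section
/- For every finite simple graph G = (V,E) on n ≥ 2 vertices and every integer t ≥ 1, there exists an ordered partition C_1, …, C_k of V into nonempty clusters such that every cluster C_i has weak diameter at most 4t·⌈log₂ n⌉ + 4, and the partition has (1/t)-cluster-degeneracy, i.e., for every i, |{ v ∈ C_i : dist_G(v, V \ (C_1 ∪ … ∪ C_i)) ≤ 2 }| ≤ |C_i| / t. -/
open SimpleGraph

variable {V : Type*}

/-!
Ball carving. Repeatedly pick a remaining vertex `v` and look at the balls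
`B j = {x ∈ R | dist v x ≤ 2 j}` inside the set `R` of vertices not yet clustered. Since
`(t / (t - 1)) ^ t ≥ 2`, the sizes `|B j| ≤ n` cannot grow by a factor larger than `t / (t - 1)`
at each of the first `t ⌈log₂ n⌉ + 1` steps, so some `j ≤ t ⌈log₂ n⌉` has
`(t - 1) |B (j + 1)| ≤ t |B j|`. Carve off `C = B (j + 1)`: its diameter is at most `4 j + 4`, and
only vertices of `B (j + 1) \ B j` lie within distance `2` of `R \ C`, at most `|C| / t` of them.
-/

theorem two_mul_pow_le_succ_pow (s : ℕ) : 2 * s ^ (s + 1) ≤ (s + 1) ^ (s + 1) := by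
  rcases Nat.eq_zero_or_pos s with rfl | hs
  · simp
  have hbernoulli : (2 : ℚ) ≤ (1 + 1 / s) ^ (s + 1) := by
    have h := one_add_mul_le_pow (a := (1 / s : ℚ))
      (by linarith [show (0 : ℚ) ≤ 1 / s by positivity]) (s + 1)
    have h1 : (1 : ℚ) ≤ ((s + 1 : ℕ) : ℚ) * (1 / s) := by
      rw [mul_one_div, le_div_iff₀ (by positivity)]; push_cast; linarith
    linarith
  have : (2 : ℚ) * s ^ (s + 1) ≤ (s + 1) ^ (s + 1) :=
    calc (2 : ℚ) * s ^ (s + 1) ≤ (1 + 1 / s) ^ (s + 1) * s ^ (s + 1) := by gcongr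
      _ = (s + 1) ^ (s + 1) := by rw [← mul_pow]; field_simp
  exact_mod_cast this

theorem pred_pow_mul_le_pow_mul_clog {t : ℕ} (ht : 1 ≤ t) (n : ℕ) :
    (t - 1) ^ (t * Nat.clog 2 n) * n ≤ t ^ (t * Nat.clog 2 n) := by
  obtain ⟨s, rfl⟩ : ∃ s, t = s + 1 := ⟨t - 1, by omega⟩
  rw [Nat.add_sub_cancel]
  calc s ^ ((s + 1) * Nat.clog 2 n) * n
      ≤ s ^ ((s + 1) * Nat.clog 2 n) * 2 ^ Nat.clog 2 n := by
        gcongr; exact Nat.le_pow_clog one_lt_two n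
    _ = (2 * s ^ (s + 1)) ^ Nat.clog 2 n := by rw [mul_pow, pow_mul]; ring
    _ ≤ ((s + 1) ^ (s + 1)) ^ Nat.clog 2 n := by gcongr; exact two_mul_pow_le_succ_pow s
    _ = (s + 1) ^ ((s + 1) * Nat.clog 2 n) := by rw [pow_mul]

theorem pow_mul_le_pow_mul_of_growth {t : ℕ} {g : ℕ → ℕ} {k : ℕ}
    (hg : ∀ j < k, t * g j ≤ (t - 1) * g (j + 1)) :
    t ^ k * g 0 ≤ (t - 1) ^ k * g k := by
  induction k with
  | zero => simp
  | succ k ih =>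
    calc t ^ (k + 1) * g 0 = t * (t ^ k * g 0) := by ring
      _ ≤ t * ((t - 1) ^ k * g k) := Nat.mul_le_mul_left _ (ih fun j hj => hg j (by omega))
      _ = (t - 1) ^ k * (t * g k) := by ring
      _ ≤ (t - 1) ^ k * ((t - 1) * g (k + 1)) := Nat.mul_le_mul_left _ (hg k (by omega))
      _ = (t - 1) ^ (k + 1) * g (k + 1) := by ring

theorem exists_slow_step_le_mul_clog {t n : ℕ} (ht : 1 ≤ t) {g : ℕ → ℕ} (hg0 : 0 < g 0)
    (hgn : ∀ j, g j ≤ n) : ∃ j ≤ t * Nat.clog 2 n, (t - 1) * g (j + 1) ≤ t * g j := by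
  by_contra! hfast
  set m := t * Nat.clog 2 n
  have hpred : 0 < t - 1 := by
    have := hfast 0 (Nat.zero_le _)
    exact Nat.pos_of_ne_zero fun h => by simp [h] at this
  have hgrowth := pow_mul_le_pow_mul_of_growth (k := m) fun j hj => (hfast j hj.le).le
  apply lt_irrefl (t ^ (m + 1))
  calc t ^ (m + 1) ≤ t ^ (m + 1) * g 0 := Nat.le_mul_of_pos_right _ hg0
    _ = t * (t ^ m * g 0) := by ring
    _ ≤ t * ((t - 1) ^ m * g m) := Nat.mul_le_mul_left _ hgrowth
    _ = (t - 1) ^ m * (t * g m) := by ring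
    _ < (t - 1) ^ m * ((t - 1) * n) :=
        Nat.mul_lt_mul_of_pos_left ((hfast m le_rfl).trans_le (Nat.mul_le_mul_left _ (hgn _)))
          (by positivity)
    _ = (t - 1) * ((t - 1) ^ m * n) := by ring
    _ ≤ (t - 1) * t ^ m := Nat.mul_le_mul_left _ (pred_pow_mul_le_pow_mul_clog ht n)
    _ < t ^ (m + 1) := by rw [pow_succ']; gcongr; omega

theorem exists_ordered_partition_of_forall_exists_subset [Finite V] (P : Set V → Set V → Prop)
    (hP : ∀ R : Set V, R.Nonempty → ∃ C ⊆ R, C.Nonempty ∧ P C (R \ C)) (R : Set V) :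
    ∃ (k : ℕ) (C : Fin k → Set V), (∀ i, (C i).Nonempty) ∧ Pairwise (Function.onFun Disjoint C) ∧
      ⋃ i, C i = R ∧ ∀ i, P (C i) {u ∈ R | ∀ j ≤ i, u ∉ C j} := by
  induction R using WellFoundedLT.induction with
  | _ R ih =>
  rcases R.eq_empty_or_nonempty with rfl | hR
  · exact ⟨0, finZeroElim, finZeroElim, nofun, Set.iUnion_of_empty _, finZeroElim⟩
  obtain ⟨C, hCR, hC, hPC⟩ := hP R hR
  obtain ⟨k, D, hD, hdisj, hunion, hPD⟩ := ih (R \ C) (LE.le.sdiff_ssubset_of_nonempty hCR hC)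
  have hDR : ∀ j, D j ⊆ R \ C := fun j => hunion ▸ Set.subset_iUnion D j
  refine ⟨k + 1, Fin.cons C D, Fin.cases hC hD, ?_, ?_, Fin.cases ?_ fun i => ?_⟩
  · have hCD : ∀ j, Disjoint C (D j) := fun j =>
      Set.disjoint_sdiff_right.mono_right (hDR j)
    intro i j hij
    cases i using Fin.cases <;> cases j using Fin.cases
    · exact absurd rfl hij
    · exact hCD _
    · exact (hCD _).symm
    · exact hdisj (ne_of_apply_ne Fin.succ hij)
  · rw [Set.iUnion_fin_add_one_eq_iUnion_succ]
    simp [Function.comp_def, hunion, Set.union_sdiff_cancel hCR]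
  · show P C _
    convert hPC using 1
    ext u
    simp
  · show P (D i) _
    convert hPD i using 1
    ext u
    simp +contextual [Fin.forall_fin_succ, and_assoc]

theorem Set.mul_ncard_sdiff_le {A B : Set V} {t : ℕ} (hB : B.Finite) (hAB : A ⊆ B)
    (hgrowth : (t - 1) * B.ncard ≤ t * A.ncard) : t * (B \ A).ncard ≤ B.ncard := by
  have := Set.ncard_le_ncard hAB hB
  rw [Set.ncard_sdiff hAB (hB.subset hAB), Nat.mul_sub]
  rcases t with _ | t
  · simp
  · simp only [add_tsub_cancel_right, add_mul, one_mul] at hgrowth ⊢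
    omega

namespace SimpleGraph

variable (G : SimpleGraph V)

def ballIn (R : Set V) (v : V) (r : ℕ) : Set V := {x ∈ R | G.edist v x ≤ r}

variable {G}

theorem ballIn_subset {R : Set V} {v : V} {r : ℕ} : G.ballIn R v r ⊆ R := fun _ hx => hx.1

theorem mem_ballIn_self {R : Set V} {v : V} (hv : v ∈ R) (r : ℕ) : v ∈ G.ballIn R v r :=
  ⟨hv, by simp⟩

theorem ballIn_mono {R : Set V} {v : V} {r s : ℕ} (hrs : r ≤ s) :
    G.ballIn R v r ⊆ G.ballIn R v s :=
  fun _ hx => ⟨hx.1, hx.2.trans (by exact_mod_cast hrs)⟩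

theorem edist_le_of_mem_ballIn {R : Set V} {v x y : V} {r : ℕ} (hx : x ∈ G.ballIn R v r)
    (hy : y ∈ G.ballIn R v r) : G.edist x y ≤ (2 * r : ℕ) :=
  calc G.edist x y ≤ G.edist x v + G.edist v y := SimpleGraph.edist_triangle
    _ = G.edist v x + G.edist v y := by rw [SimpleGraph.edist_comm]
    _ ≤ r + r := add_le_add hx.2 hy.2
    _ = (2 * r : ℕ) := by push_cast; ring

theorem near_compl_ballIn_subset (R : Set V) (v : V) (r : ℕ) :
    {x ∈ G.ballIn R v (r + 2) | ∃ u ∈ R \ G.ballIn R v (r + 2), G.edist x u ≤ 2} ⊆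
      G.ballIn R v (r + 2) \ G.ballIn R v r := by
  rintro x ⟨hx, u, ⟨huR, hu⟩, hxu⟩
  refine ⟨hx, fun hxr => hu ⟨huR, ?_⟩⟩
  calc G.edist v u ≤ G.edist v x + G.edist x u := SimpleGraph.edist_triangle
    _ ≤ r + 2 := add_le_add hxr.2 hxu
    _ = (r + 2 : ℕ) := by push_cast; rfl

theorem exists_ballIn_cluster [Finite V] {t n : ℕ} (ht : 1 ≤ t) {R : Set V} (hRn : R.ncard ≤ n)
    {v : V} (hv : v ∈ R) :
    ∃ C ⊆ R, v ∈ C ∧ (∀ x ∈ C, ∀ y ∈ C, G.edist x y ≤ (4 * t * Nat.clog 2 n + 4 : ℕ)) ∧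
      t * {x ∈ C | ∃ u ∈ R \ C, G.edist x u ≤ 2}.ncard ≤ C.ncard := by
  obtain ⟨j, hj, hgrowth⟩ :=
    exists_slow_step_le_mul_clog ht (g := fun j => (G.ballIn R v (2 * j)).ncard)
    ((Set.ncard_pos).2 ⟨v, mem_ballIn_self hv _⟩)
    (fun j => (Set.ncard_le_ncard ballIn_subset).trans hRn)
  refine ⟨G.ballIn R v (2 * j + 2), ballIn_subset, mem_ballIn_self hv _, ?_, ?_⟩
  · intro x hx y hy
    exact (edist_le_of_mem_ballIn hx hy).trans (by gcongr; lia)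
  · calc _ ≤ t * (G.ballIn R v (2 * j + 2) \ G.ballIn R v (2 * j)).ncard :=
          Nat.mul_le_mul_left _ (Set.ncard_le_ncard (near_compl_ballIn_subset R v _))
      _ ≤ _ := Set.mul_ncard_sdiff_le (Set.toFinite _) (ballIn_mono (by lia)) hgrowth

end SimpleGraph

theorem stmt5_general [Fintype V] (G : SimpleGraph V) (t : ℕ) (ht : 1 ≤ t) :
    ∃ (k : ℕ) (C : Fin k → Set V),
      (∀ i, (C i).Nonempty) ∧
      Pairwise (Function.onFun Disjoint C) ∧
      (⋃ i, C i) = Set.univ ∧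
      (∀ i, ∀ u ∈ C i, ∀ w ∈ C i,
        G.edist u w ≤ ((4 * t * Nat.clog 2 (Fintype.card V) + 4 : ℕ) : ℕ∞)) ∧
      (∀ i, ((closeSet G C i).ncard : ℝ) ≤ ((C i).ncard : ℝ) / (t : ℝ)) := by
  obtain ⟨k, C, hne, hdisj, hcover, hgood⟩ := exists_ordered_partition_of_forall_exists_subset
    (fun C S => (∀ x ∈ C, ∀ y ∈ C, G.edist x y ≤ (4 * t * Nat.clog 2 (Fintype.card V) + 4 : ℕ)) ∧
      t * {x ∈ C | ∃ u ∈ S, G.edist x u ≤ 2}.ncard ≤ C.ncard)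
    (fun R ⟨v, hv⟩ => by
      obtain ⟨C, hCR, hvC, hdiam, hnear⟩ := G.exists_ballIn_cluster ht
        ((Set.ncard_le_card R).trans_eq Nat.card_eq_fintype_card) hv
      exact ⟨C, hCR, ⟨v, hvC⟩, hdiam, hnear⟩)
    Set.univ
  refine ⟨k, C, hne, hdisj, hcover, fun i => (hgood i).1, fun i => ?_⟩
  have hclose : closeSet G C i = {x ∈ C i | ∃ u ∈ {u ∈ Set.univ | ∀ j ≤ i, u ∉ C j},
      G.edist x u ≤ 2} := by
    simp [closeSet]
  rw [le_div_iff₀ (by exact_mod_cast ht), hclose, mul_comm]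
  exact_mod_cast (hgood i).2

theorem stmt5 [Fintype V] (G : SimpleGraph V) (t : ℕ) (ht : 1 ≤ t)
    (hn : 2 ≤ Fintype.card V) :
    ∃ (k : ℕ) (C : Fin k → Set V),
      (∀ i, (C i).Nonempty) ∧
      Pairwise (Function.onFun Disjoint C) ∧
      (⋃ i, C i) = Set.univ ∧
      (∀ i, ∀ u ∈ C i, ∀ w ∈ C i,
        G.edist u w ≤ ((4 * t * Nat.clog 2 (Fintype.card V) + 4 : ℕ) : ℕ∞)) ∧
      (∀ i, ((closeSet G C i).ncard : ℝ) ≤ ((C i).ncard : ℝ) / (t : ℝ)) :=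
  stmt5_general G t ht
end

section
/- For every finite simple graph G = (V,E) on n ≥ 2 vertices and every integer t ≥ 1, there exists a (4t·⌈log₂ n⌉ + 4, 1/t)-Two-Separated partition of G. -/
/-!
Ball carving: while vertices remain, pick one, `v`, and remove from the remaining set `W` the
cluster `{u ∈ W | d(v, u) ≤ r + 2}` (distances taken in `G`), putting its two outer layers
`r < d(v, u) ≤ r + 2` into `X`. Among the radii `r = 0, 2, …, 2t⌈log₂ n⌉` there is one for which
the ball of radius `r + 2` is at most `1 + 1/t` times the ball of radius `r`, since otherwise the
balls would outgrow `(1 + 1/t) ^ (t⌈log₂ n⌉) ≥ n`; for that radius the two layers are at most a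
`1/t` fraction of the cluster.

Two-separation is proved along the carving for walks inside the remaining vertices together with
a superset `Y` of `X`, which absorbs the layers removed earlier. If the walk comes within distance
`r + 1` of the current centre then, as one of its endpoints lies in a later cluster at distance
`≥ r + 2` and the distance changes by at most one per step, some edge of the walk joins two
vertices of the layers. Otherwise the walk meets the current cluster only in its layers, and the
rest of the carving takes over.
-/

open SimpleGraph

variable {V : Type*}

namespace SimpleGraph

variable {G : SimpleGraph V}

lemma edist_le_edist_add_one_of_adj {v u z : V} (h : G.Adj u z) :
    G.edist v z ≤ G.edist v u + 1 :=
  calc G.edist v z ≤ G.edist v u + G.edist u z := G.edist_triangle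
    _ = G.edist v u + 1 := by rw [edist_eq_one_iff_adj.mpr h]

namespace Walk

lemma exists_getVert_eq_of_mem_darts {x y : V} {w : G.Walk x y} {d : G.Dart}
    (hd : d ∈ w.darts) : ∃ i < w.length, w.getVert i = d.fst ∧ w.getVert (i + 1) = d.snd := by
  obtain ⟨i, hi, rfl⟩ := List.mem_iff_getElem.mp hd
  exact ⟨i, w.length_darts ▸ hi, by simp [darts_getElem_eq_getVert]⟩

lemma exists_dart_eq_of_le_of_le {f : V → ℕ∞} (hf : ∀ u z, G.Adj u z → f z ≤ f u + 1)
    (m : ℕ) {x y : V} (w : G.Walk x y) (hx : f x ≤ m) (hy : ((m + 1 : ℕ) : ℕ∞) ≤ f y) :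
    ∃ d ∈ w.darts, f d.fst = m ∧ f d.snd = (m + 1 : ℕ) := by
  induction w with
  | nil => exact absurd (hy.trans hx) (by exact_mod_cast (by omega : ¬ m + 1 ≤ m))
  | @cons x z y h p ih =>
    by_cases hz : f z ≤ m
    · obtain ⟨d, hd, hfd⟩ := ih hz hy
      exact ⟨d, List.mem_cons_of_mem _ hd, hfd⟩
    · have hzm : ((m + 1 : ℕ) : ℕ∞) ≤ f z := by
        push_cast
        exact (ENat.add_one_le_iff (ENat.natCast_ne_top m)).mpr (not_le.mp hz)
      have hxz := hzm.trans (hf x z h)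
      push_cast at hxz
      refine ⟨⟨(x, z), h⟩, List.mem_cons_self .., ?_, ?_⟩
      · exact hx.antisymm ((ENat.add_le_add_iff_right ENat.one_ne_top).mp hxz)
      · refine ((hf x z h).trans ?_).antisymm hzm
        push_cast
        gcongr

lemma exists_dart_mem_Icc {f : V → ℕ∞} (hf : ∀ u z, G.Adj u z → f z ≤ f u + 1)
    (m : ℕ) {x y u : V} (w : G.Walk x y) (hu : u ∈ w.support) (hfu : f u ≤ m)
    (hxy : ((m + 1 : ℕ) : ℕ∞) ≤ f x ∨ ((m + 1 : ℕ) : ℕ∞) ≤ f y) :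
    ∃ d ∈ w.darts,
      f d.fst ∈ Set.Icc (m : ℕ∞) (m + 1 : ℕ) ∧ f d.snd ∈ Set.Icc (m : ℕ∞) (m + 1 : ℕ) := by
  classical
  rcases hxy with hx | hy
  · obtain ⟨d, hd, hd₁, hd₂⟩ :=
      exists_dart_eq_of_le_of_le hf m (w.takeUntil u hu).reverse hfu hx
    refine ⟨d.symm, w.darts_takeUntil_subset_darts hu (mem_darts_reverse.mp hd), ?_, ?_⟩
    · simp [hd₂]
    · simp [hd₁]
  · obtain ⟨d, hd, hd₁, hd₂⟩ := exists_dart_eq_of_le_of_le hf m (w.dropUntil u hu) hfu hy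
    exact ⟨d, w.darts_dropUntil_subset_darts hu hd, by simp [hd₁], by simp [hd₂]⟩

end Walk

end SimpleGraph

lemma exists_lt_succ_le_mul_of_le_pow {g : ℕ → ℝ} {q : ℝ} (hq : 1 < q) {S : ℕ}
    (hg0 : 1 ≤ g 0) (hgS : g (S + 1) ≤ q ^ S) : ∃ s < S + 1, g (s + 1) ≤ q * g s := by
  by_contra! hgrow
  have hgeom : q ^ (S + 1) * g 0 ≤ g (S + 1) :=
    geom_le (by positivity) _ fun k hk => (hgrow k hk).le
  have : q ^ (S + 1) ≤ q ^ S := by nlinarith [pow_pos (zero_lt_one.trans hq) (S + 1)]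
  exact (pow_lt_pow_right₀ hq (Nat.lt_succ_self S)).not_ge this

lemma le_one_add_one_div_pow_mul_clog {t : ℕ} (ht : 1 ≤ t) (n : ℕ) :
    (n : ℝ) ≤ (1 + 1 / t) ^ (t * Nat.clog 2 n) := by
  have h2 : (2 : ℝ) ≤ (1 + 1 / t) ^ t := by
    have := one_add_mul_le_pow (a := 1 / (t : ℝ))
      (by linarith [show (0 : ℝ) ≤ 1 / t by positivity]) t
    rwa [mul_one_div_cancel (by positivity), one_add_one_eq_two] at this
  calc (n : ℝ) ≤ 2 ^ Nat.clog 2 n := by exact_mod_cast Nat.le_pow_clog one_lt_two _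
    _ ≤ ((1 + 1 / t) ^ t) ^ Nat.clog 2 n := by gcongr
    _ = (1 + 1 / t) ^ (t * Nat.clog 2 n) := by rw [← pow_mul]

namespace BallCarving

variable (G : SimpleGraph V)

def ball (W : Set V) (v : V) (k : ℕ) : Set V := {u ∈ W | G.edist v u ≤ k}

def annulus (W : Set V) (v : V) (r : ℕ) : Set V := ball G W v (r + 2) \ ball G W v r

inductive IsCarving (ε : ℝ) (R : ℕ) : Set V → Set (Set V) → Set V → Prop
  | empty : IsCarving ε R ∅ ∅ ∅
  | carve {W : Set V} {v : V} {r : ℕ} {𝒞 : Set (Set V)} {X : Set V} (hv : v ∈ W)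
      (hr : r + 2 ≤ R)
      (hcost : ((annulus G W v r).ncard : ℝ) ≤ ε * (ball G W v (r + 2)).ncard)
      (hrest : IsCarving ε R (W \ ball G W v (r + 2)) 𝒞 X) :
      IsCarving ε R W (insert (ball G W v (r + 2)) 𝒞) (X ∪ annulus G W v r)

variable {G} {W : Set V} {v : V}

lemma ball_subset (k : ℕ) : ball G W v k ⊆ W := Set.sep_subset _ _

lemma ball_mono {k l : ℕ} (h : k ≤ l) : ball G W v k ⊆ ball G W v l :=
  fun _ hu => ⟨hu.1, hu.2.trans (by exact_mod_cast h)⟩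

lemma mem_ball_self (hv : v ∈ W) (k : ℕ) : v ∈ ball G W v k := ⟨hv, by simp⟩

lemma mem_annulus_of_mem_Icc {r : ℕ} {u : V} (hu : u ∈ W)
    (h : G.edist v u ∈ Set.Icc ((r + 1 : ℕ) : ℕ∞) (r + 2 : ℕ)) : u ∈ annulus G W v r := by
  refine ⟨⟨hu, h.2⟩, fun hur => ?_⟩
  have := h.1.trans hur.2
  norm_cast at this
  omega

lemma lt_edist_of_mem_sdiff_ball {k : ℕ} {u : V} (hu : u ∈ W \ ball G W v k) :
    (k : ℕ∞) < G.edist v u :=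
  lt_of_not_ge fun hle => hu.2 ⟨hu.1, hle⟩

variable {ε : ℝ} {R : ℕ} {𝒞 : Set (Set V)} {X : Set V}

namespace IsCarving

lemma subset_of_mem (h : IsCarving G ε R W 𝒞 X) {C : Set V} (hC : C ∈ 𝒞) : C ⊆ W := by
  induction h with
  | empty => simp at hC
  | carve _ _ _ _ ih =>
    rcases hC with rfl | hC
    · exact ball_subset _
    · exact (ih hC).trans Set.sdiff_subset

lemma subset (h : IsCarving G ε R W 𝒞 X) : X ⊆ W := by
  induction h with
  | empty => rfl
  | carve _ _ _ _ ih =>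
    exact Set.union_subset (ih.trans Set.sdiff_subset) (Set.sdiff_subset.trans (ball_subset _))

lemma nonempty_of_mem (h : IsCarving G ε R W 𝒞 X) {C : Set V} (hC : C ∈ 𝒞) : C.Nonempty := by
  induction h with
  | empty => simp at hC
  | carve hv _ _ _ ih =>
    rcases hC with rfl | hC
    · exact ⟨_, mem_ball_self hv _⟩
    · exact ih hC

lemma existsUnique_mem (h : IsCarving G ε R W 𝒞 X) {a : V} (ha : a ∈ W) :
    ∃! C, C ∈ 𝒞 ∧ a ∈ C := by
  induction h with
  | empty => simp at ha
  | @carve W v r 𝒞 X _ _ _ hrest ih =>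
    by_cases hab : a ∈ ball G W v (r + 2)
    · refine ⟨_, ⟨Set.mem_insert _ _, hab⟩, ?_⟩
      rintro C ⟨rfl | hC, haC⟩
      · rfl
      · exact absurd hab (hrest.subset_of_mem hC haC).2
    · obtain ⟨C, ⟨hC, haC⟩, huniq⟩ := ih ⟨ha, hab⟩
      refine ⟨C, ⟨Set.mem_insert_of_mem _ hC, haC⟩, ?_⟩
      rintro D ⟨rfl | hD, haD⟩
      · exact absurd haD hab
      · exact huniq D ⟨hD, haD⟩

lemma isPartition (h : IsCarving G ε R Set.univ 𝒞 X) : Setoid.IsPartition 𝒞 :=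
  ⟨fun h₀ => (h.nonempty_of_mem h₀).ne_empty rfl, fun _ => h.existsUnique_mem trivial⟩

lemma edist_le (h : IsCarving G ε R W 𝒞 X) {C : Set V} (hC : C ∈ 𝒞) {u u' : V} (hu : u ∈ C)
    (hu' : u' ∈ C) : G.edist u u' ≤ (2 * R : ℕ) := by
  induction h with
  | empty => simp at hC
  | @carve W v r 𝒞 X _ hr _ _ ih =>
    rcases hC with rfl | hC
    · calc G.edist u u' ≤ G.edist u v + G.edist v u' := G.edist_triangle
        _ = G.edist v u + G.edist v u' := by rw [edist_comm]
        _ ≤ (r + 2 : ℕ) + (r + 2 : ℕ) := add_le_add hu.2 hu'.2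
        _ ≤ (2 * R : ℕ) := by norm_cast; omega
    · exact ih hC

lemma ncard_inter_le (h : IsCarving G ε R W 𝒞 X) {C : Set V} (hC : C ∈ 𝒞) :
    ((C ∩ X).ncard : ℝ) ≤ ε * C.ncard := by
  induction h with
  | empty => simp at hC
  | @carve W v r 𝒞 X _ _ hcost hrest ih =>
    have hann : annulus G W v r ⊆ ball G W v (r + 2) := Set.sdiff_subset
    rcases hC with rfl | hC
    · have hX : Disjoint (ball G W v (r + 2)) X :=
        Set.disjoint_left.mpr fun u hu huX => (hrest.subset huX).2 hu
      rwa [Set.inter_union_distrib_left, hX.inter_eq, Set.empty_union,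
        Set.inter_eq_right.mpr hann]
    · have hA : Disjoint C (annulus G W v r) :=
        Set.disjoint_left.mpr fun u hu huA => (hrest.subset_of_mem hC hu).2 (hann huA)
      rw [Set.inter_union_distrib_left, hA.inter_eq, Set.union_empty]
      exact ih hC

lemma exists_dart_mem {Y : Set V} (h : IsCarving G ε R W 𝒞 X) (hXY : X ⊆ Y) {C D : Set V}
    (hC : C ∈ 𝒞) (hD : D ∈ 𝒞) (hCD : C ≠ D) {a b : V} (ha : a ∈ C \ Y) (hb : b ∈ D \ Y)
    (w : G.Walk a b) (hw : ∀ u ∈ w.support, u ∈ Y ∪ W) :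
    ∃ d ∈ w.darts, d.fst ∈ Y ∧ d.snd ∈ Y := by
  induction h generalizing C D a b with
  | empty => simp at hC
  | @carve W v r 𝒞 X _ _ _ hrest ih =>
    have hAY : annulus G W v r ⊆ Y := Set.subset_union_right.trans hXY
    have hfar : ∀ E ∈ 𝒞, ∀ z ∈ E, ((r + 2 : ℕ) : ℕ∞) ≤ G.edist v z := fun E hE z hz =>
      (lt_edist_of_mem_sdiff_ball (hrest.subset_of_mem hE hz)).le
    by_cases hnear : ∃ u ∈ w.support, G.edist v u ≤ (r + 1 : ℕ)
    · obtain ⟨u, hu, hvu⟩ := hnear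
      have hends : ((r + 2 : ℕ) : ℕ∞) ≤ G.edist v a ∨ ((r + 2 : ℕ) : ℕ∞) ≤ G.edist v b := by
        rcases hC with rfl | hC
        · rcases hD with rfl | hD
          · exact absurd rfl hCD
          · exact .inr (hfar D hD b hb.1)
        · exact .inl (hfar C hC a ha.1)
      have hY : ∀ z ∈ w.support, G.edist v z ∈ Set.Icc ((r + 1 : ℕ) : ℕ∞) (r + 2 : ℕ) → z ∈ Y :=
        fun z hz hzr => (hw z hz).elim id fun hzW => hAY (mem_annulus_of_mem_Icc hzW hzr)
      obtain ⟨d, hd, hd₁, hd₂⟩ := w.exists_dart_mem_Icc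
        (fun _ _ => edist_le_edist_add_one_of_adj) (r + 1) hu hvu hends
      exact ⟨d, hd, hY _ (w.dart_fst_mem_support_of_mem_darts hd) hd₁,
        hY _ (w.dart_snd_mem_support_of_mem_darts hd) hd₂⟩
    · have hcore : ∀ z ∈ w.support, z ∉ ball G W v r := fun z hz hzr =>
        hnear ⟨z, hz, hzr.2.trans (by norm_cast; omega)⟩
      have hrest_mem : ∀ E ∈ insert (ball G W v (r + 2)) 𝒞, ∀ z ∈ E \ Y, z ∈ w.support →
          E ∈ 𝒞 := by
        rintro E (rfl | hE) z hz hzw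
        · exact absurd (hAY ⟨hz.1, hcore z hzw⟩) hz.2
        · exact hE
      refine ih (Set.subset_union_left.trans hXY) (hrest_mem C hC a ha w.start_mem_support)
        (hrest_mem D hD b hb w.end_mem_support) hCD ha hb w fun z hz => ?_
      rcases hw z hz with hzY | hzW
      · exact .inl hzY
      · by_cases hzB : z ∈ ball G W v (r + 2)
        · exact .inl (hAY ⟨hzB, hcore z hz⟩)
        · exact .inr ⟨hzW, hzB⟩

end IsCarving

lemma exists_radius [Fintype V] {t : ℕ} (ht : 1 ≤ t) {W : Set V} {v : V} (hv : v ∈ W) :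
    ∃ r, r + 2 ≤ 2 * t * Nat.clog 2 (Fintype.card V) + 2 ∧
      ((annulus G W v r).ncard : ℝ) ≤ 1 / t * (ball G W v (r + 2)).ncard := by
  let g : ℕ → ℝ := fun s => (ball G W v (2 * s)).ncard
  have hg0 : 1 ≤ g 0 := by
    show (1 : ℝ) ≤ (ball G W v (2 * 0)).ncard
    exact_mod_cast (Set.ncard_pos).mpr ⟨v, mem_ball_self hv _⟩
  have hgn : g (t * Nat.clog 2 (Fintype.card V) + 1) ≤ Fintype.card V := by
    show ((ball G W v _).ncard : ℝ) ≤ _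
    exact_mod_cast (Set.ncard_le_card _).trans_eq Nat.card_eq_fintype_card
  have hq : 1 < 1 + 1 / (t : ℝ) := lt_add_of_pos_right _ (by positivity)
  obtain ⟨s, hs, hgs⟩ := exists_lt_succ_le_mul_of_le_pow hq hg0
    (hgn.trans (le_one_add_one_div_pow_mul_clog ht _))
  have hsub : ball G W v (2 * s) ⊆ ball G W v (2 * s + 2) := ball_mono (by omega)
  have hmono : g s ≤ g (s + 1) := by
    show ((ball G W v (2 * s)).ncard : ℝ) ≤ (ball G W v (2 * s + 2)).ncard
    exact_mod_cast Set.ncard_le_ncard hsub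
  have hann : ((annulus G W v (2 * s)).ncard : ℝ) = g (s + 1) - g s := by
    rw [annulus, Set.ncard_sdiff hsub, Nat.cast_sub (Set.ncard_le_ncard hsub)]
    rfl
  refine ⟨2 * s, by rw [mul_assoc]; omega, ?_⟩
  calc ((annulus G W v (2 * s)).ncard : ℝ) = g (s + 1) - g s := hann
    _ ≤ 1 / t * g s := by linarith
    _ ≤ 1 / t * g (s + 1) := by gcongr

lemma exists_isCarving [Fintype V] {t : ℕ} (ht : 1 ≤ t) (W : Set V) :
    ∃ 𝒞 X, IsCarving G (1 / t) (2 * t * Nat.clog 2 (Fintype.card V) + 2) W 𝒞 X := by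
  induction W using WellFoundedLT.induction with
  | ind W ih =>
    rcases W.eq_empty_or_nonempty with rfl | ⟨v, hv⟩
    · exact ⟨∅, ∅, .empty⟩
    obtain ⟨r, hr, hcost⟩ := exists_radius (G := G) ht hv
    obtain ⟨𝒞, X, h⟩ :=
      ih _ (Set.sdiff_ssubset_left_iff.mpr ⟨v, hv, mem_ball_self hv (r + 2)⟩)
    exact ⟨_, _, .carve hv hr hcost h⟩

end BallCarving

theorem stmt6_general [Fintype V] (G : SimpleGraph V) (t : ℕ) (ht : 1 ≤ t) :
    ∃ (𝒞 : Set (Set V)) (X : Set V),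
      IsTSPartition G (4 * t * Nat.clog 2 (Fintype.card V) + 4) (1 / (t : ℝ)) 𝒞 X := by
  obtain ⟨𝒞, X, h⟩ := BallCarving.exists_isCarving (G := G) ht Set.univ
  refine ⟨𝒞, X, h.isPartition, ?_, ?_, fun C hC => h.ncard_inter_le hC⟩
  · intro C hC D hD hCD a b ha hb w
    obtain ⟨d, hd, hd₁, hd₂⟩ :=
      h.exists_dart_mem subset_rfl hC hD hCD ha hb w fun _ _ => .inr trivial
    obtain ⟨i, hi, hi₁, hi₂⟩ := Walk.exists_getVert_eq_of_mem_darts hd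
    exact ⟨i, hi, hi₁ ▸ hd₁, hi₂ ▸ hd₂⟩
  · intro C hC u hu u' hu'
    convert h.edist_le hC hu hu' using 2
    ring

theorem stmt6 [Fintype V] (G : SimpleGraph V) (t : ℕ) (ht : 1 ≤ t)
    (hn : 2 ≤ Fintype.card V) :
    ∃ (𝒞 : Set (Set V)) (X : Set V),
      IsTSPartition G (4 * t * Nat.clog 2 (Fintype.card V) + 4) (1 / (t : ℝ)) 𝒞 X :=
  stmt6_general G t ht
end

section
/- Let G = (V,E) be a finite simple graph on n ≥ 2 vertices, let t ≥ 1 be an integer, and set ℓ = ⌈log₂ n⌉. Let v_1, …, v_n be an enumeration of V, and suppose sets L_1, …, L_{n+1} ⊆ V and C_1, …, C_n ⊆ V are given as follows: L_1 = V, and for each i ∈ {1,…,n} either (skipped step) C_i = ∅ and L_{i+1} = L_i, or (taken step) there is an even integer r_i with 2tℓ + 2 ≤ r_i ≤ 8tℓ such that |B_{r_i}(v_i) ∩ L_i| ≤ (1 + 1/t)·|B_{r_i−2}(v_i) ∩ L_i|, C_i = B_{r_i}(v_i) ∩ L_i is nonempty, and L_{i+1} = L_i \ C_i. Suppose L_{n+1}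 = ∅. Let 𝒞 be the collection of the nonempty clusters C_i and let X = ⋃_{i taken} ( C_i ∩ B_2(L_i \ C_i) ). Then (𝒞, X) is a (16tℓ, 1/t)-Two-Separated partition of G. -/
open SimpleGraph

variable {V : Type*}

lemma edist_le_one_of_adj' {G : SimpleGraph V} {u v : V} (h : G.Adj u v) : G.edist u v ≤ 1 := by
  simpa using SimpleGraph.edist_le (Walk.cons h Walk.nil)

lemma walk_edist_le' {G : SimpleGraph V} {a b : V} (w : G.Walk a b) (q d : ℕ) :
    G.edist (w.getVert q) (w.getVert (q + d)) ≤ (d : ℕ∞) := by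
  induction d with
  | zero => simp [SimpleGraph.edist_self]
  | succ d ih =>
    have h1 : G.edist (w.getVert (q + d)) (w.getVert (q + d + 1)) ≤ 1 := by
      by_cases h : q + d < w.length
      · exact edist_le_one_of_adj' (w.adj_getVert_succ h)
      · push_neg at h
        rw [w.getVert_of_length_le h, w.getVert_of_length_le (le_trans h (Nat.le_succ _))]
        simp [SimpleGraph.edist_self]
    calc G.edist (w.getVert q) (w.getVert (q + (d+1)))
        ≤ G.edist (w.getVert q) (w.getVert (q + d)) + G.edist (w.getVert (q+d)) (w.getVert (q+d+1)) :=
          SimpleGraph.edist_triangle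
      _ ≤ (d : ℕ∞) + 1 := add_le_add ih h1
      _ = ((d+1 : ℕ) : ℕ∞) := by push_cast; ring

lemma fin_succ_le_castSucc {n : ℕ} {i j : Fin n} (h : i < j) : i.succ ≤ j.castSucc := by
  rw [Fin.le_def]; simp only [Fin.val_succ, Fin.coe_castSucc]; omega

theorem stmt8 [Fintype V] (G : SimpleGraph V) (t : ℕ) (ht : 1 ≤ t)
    (hn : 2 ≤ Fintype.card V)
    (v : Fin (Fintype.card V) → V) (hv : Function.Bijective v)
    (L : Fin (Fintype.card V + 1) → Set V) (C : Fin (Fintype.card V) → Set V)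
    (hL0 : L 0 = Set.univ)
    (hstep : ∀ i : Fin (Fintype.card V),
      (C i = ∅ ∧ L i.succ = L i.castSucc) ∨
      (∃ r : ℕ, Even r ∧ 2 * t * Nat.clog 2 (Fintype.card V) + 2 ≤ r ∧
        r ≤ 8 * t * Nat.clog 2 (Fintype.card V) ∧
        ((sball G (v i) r ∩ L i.castSucc).ncard : ℝ)
          ≤ (1 + 1 / (t : ℝ)) * ((sball G (v i) (r - 2) ∩ L i.castSucc).ncard : ℝ) ∧
        C i = sball G (v i) r ∩ L i.castSucc ∧ (C i).Nonempty ∧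
        L i.succ = L i.castSucc \ C i))
    (hLend : L (Fin.last (Fintype.card V)) = ∅) :
    IsTSPartition G (16 * t * Nat.clog 2 (Fintype.card V)) (1 / (t : ℝ))
      {D : Set V | D.Nonempty ∧ ∃ i, C i = D}
      (⋃ i, C i ∩ setBall G (L i.castSucc \ C i) 2) := by
  classical
  set X := (⋃ i, C i ∩ setBall G (L i.castSucc \ C i) 2) with hXdef
  -- basic structural facts
  have hsub : ∀ i : Fin (Fintype.card V), L i.succ ⊆ L i.castSucc := by
    intro i
    rcases hstep i with ⟨_, h⟩ | ⟨r, _, _, _, _, _, _, h⟩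
    · rw [h]
    · rw [h]; exact Set.diff_subset
  have hmono : ∀ b : Fin (Fintype.card V + 1), ∀ a, a ≤ b → L b ⊆ L a := by
    intro b
    induction b using Fin.induction with
    | zero => intro a ha; rw [Fin.le_zero_iff.mp ha]
    | succ i ih =>
      intro a ha
      by_cases h : a ≤ i.castSucc
      · exact (hsub i).trans (ih a h)
      · have hval : a = i.succ := by
          rw [Fin.le_def] at ha h
          apply Fin.ext
          simp only [Fin.val_succ] at ha ⊢
          simp only [Fin.coe_castSucc] at h
          omega
        rw [hval]
  have htaken : ∀ i : Fin (Fintype.card V), (C i).Nonempty →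
      (∃ r : ℕ, Even r ∧ 2 * t * Nat.clog 2 (Fintype.card V) + 2 ≤ r ∧
        r ≤ 8 * t * Nat.clog 2 (Fintype.card V) ∧
        ((sball G (v i) r ∩ L i.castSucc).ncard : ℝ)
          ≤ (1 + 1 / (t : ℝ)) * ((sball G (v i) (r - 2) ∩ L i.castSucc).ncard : ℝ) ∧
        C i = sball G (v i) r ∩ L i.castSucc ∧ (C i).Nonempty ∧
        L i.succ = L i.castSucc \ C i) := by
    intro i hne
    rcases hstep i with ⟨h, _⟩ | h
    · rw [h] at hne; exact absurd hne (by simp)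
    · exact h
  have hCL : ∀ i : Fin (Fintype.card V), C i ⊆ L i.castSucc := by
    intro i u hu
    obtain ⟨r, _, _, _, _, hCeq, _, _⟩ := htaken i ⟨u, hu⟩
    rw [hCeq] at hu; exact hu.2
  have hCnotL : ∀ i : Fin (Fintype.card V), ∀ u ∈ C i, u ∉ L i.succ := by
    intro i u hu
    obtain ⟨r, _, _, _, _, _, _, hLeq⟩ := htaken i ⟨u, hu⟩
    rw [hLeq]; exact fun h => h.2 hu
  have hdisj : ∀ {i j : Fin (Fintype.card V)} {u : V}, u ∈ C i → u ∈ C j → i = j := by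
    have key : ∀ {i j : Fin (Fintype.card V)} {u : V}, i < j → u ∈ C i → u ∈ C j → False := by
      intro i j u hij hi hj
      exact hCnotL i u hi (hmono j.castSucc i.succ (fin_succ_le_castSucc hij) (hCL j hj))
    intro i j u hi hj
    rcases lt_trichotomy i j with h | h | h
    · exact absurd (key h hi hj) (by simp)
    · exact h
    · exact absurd (key h hj hi) (by simp)
  have cover : ∀ u : V, ∃ i, u ∈ C i := by
    intro u
    have hex : ∀ b : Fin (Fintype.card V + 1), u ∉ L b →
        ∃ i : Fin (Fintype.card V), u ∈ L i.castSucc ∧ u ∉ L i.succ := by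
      intro b
      induction b using Fin.induction with
      | zero => intro hb; exact absurd (by rw [hL0]; trivial) hb
      | succ i ih =>
        intro hb
        by_cases h : u ∈ L i.castSucc
        · exact ⟨i, h, hb⟩
        · exact ih h
    obtain ⟨i, h1, h2⟩ := hex (Fin.last _) (by rw [hLend]; exact Set.notMem_empty u)
    rcases hstep i with ⟨_, hL⟩ | ⟨r, _, _, _, _, _, _, hLeq⟩
    · rw [hL] at h2; exact absurd h1 h2
    · rw [hLeq] at h2
      exact ⟨i, by_contra fun h => h2 ⟨h1, h⟩⟩
  let idx : V → Fin (Fintype.card V) := fun u => (cover u).choose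
  have hidx : ∀ u : V, u ∈ C (idx u) := fun u => (cover u).choose_spec
  have idx_eq : ∀ {i : Fin (Fintype.card V)} {u : V}, u ∈ C i → idx u = i :=
    fun h => hdisj (hidx _) h
  -- X membership lemmas
  have memX : ∀ {i : Fin (Fintype.card V)} {u x : V}, u ∈ C i → x ∈ L i.castSucc → x ∉ C i →
      G.edist x u ≤ 2 → u ∈ X := by
    intro i u x h1 h2 h3 h4
    exact Set.mem_iUnion.mpr ⟨i, h1, ⟨x, ⟨h2, h3⟩, h4⟩⟩
  have XofNear : ∀ {i j : Fin (Fintype.card V)} {u x : V}, u ∈ C i → x ∈ C j → i < j →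
      G.edist u x ≤ 2 → u ∈ X := by
    intro i j u x h1 h2 hij h4
    obtain ⟨r, _, _, _, _, _, _, hLeq⟩ := htaken i ⟨u, h1⟩
    have hx : x ∈ L i.succ := hmono j.castSucc i.succ (fin_succ_le_castSucc hij) (hCL j h2)
    rw [hLeq] at hx
    exact memX h1 hx.1 hx.2 (by rwa [SimpleGraph.edist_comm] at h4)
  have Xinv : ∀ {i : Fin (Fintype.card V)} {u : V}, u ∈ C i → u ∈ X →
      ∃ x, x ∈ L i.castSucc ∧ x ∉ C i ∧ G.edist x u ≤ 2 := by
    intro i u h1 h2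
    obtain ⟨j, hj⟩ := Set.mem_iUnion.mp h2
    obtain ⟨hu, x, ⟨hx1, hx2⟩, hx3⟩ := hj
    obtain rfl : j = i := hdisj hu h1
    exact ⟨x, hx1, hx2, hx3⟩
  refine ⟨⟨?_, ?_⟩, ?_, ?_, ?_⟩
  · -- ∅ not in the collection
    exact fun h => Set.not_nonempty_empty h.1
  · -- existence and uniqueness
    intro a
    refine ⟨C (idx a), ⟨⟨⟨a, hidx a⟩, idx a, rfl⟩, hidx a⟩, ?_⟩
    rintro D ⟨⟨hne, i, rfl⟩, haD⟩
    rw [idx_eq haD]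
  · -- two separation
    rintro Cl ⟨hClne, iC, rfl⟩ D ⟨hDne, iD, rfl⟩ hne a b ⟨ha, haX⟩ ⟨hb, hbX⟩ w
    have hiab : idx a ≠ idx b := by
      rw [idx_eq ha, idx_eq hb]
      intro h; exact hne (by rw [h])
    have key : ∀ M q, w.length - q ≤ M → q ≤ w.length → w.getVert q ∉ X →
        idx (w.getVert q) ≠ idx b →
        ∃ i, i < w.length ∧ w.getVert i ∈ X ∧ w.getVert (i+1) ∈ X := by
      intro M
      induction M with
      | zero =>
        intro q hq hqlen hqX hqidx
        have hq' : w.getVert q = b := by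
          rw [show q = w.length by omega]; exact w.getVert_length
        rw [hq'] at hqidx
        exact absurd rfl hqidx
      | succ M ih =>
        intro q hq hqlen hqX hqidx
        by_cases hqlt : q < w.length
        swap
        · have hq' : w.getVert q = b := by
            rw [show q = w.length by omega]; exact w.getVert_length
          rw [hq'] at hqidx
          exact absurd rfl hqidx
        have hexit : ∃ d, w.getVert (q + d) ∉ C (idx (w.getVert q)) := by
          refine ⟨w.length - q, ?_⟩
          rw [show q + (w.length - q) = w.length by omega, w.getVert_length]
          exact fun hb' => hqidx (idx_eq hb').symm
        set d0 := Nat.find hexit with hd0def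
        have hd0 : w.getVert (q + d0) ∉ C (idx (w.getVert q)) := Nat.find_spec hexit
        have hd0pos : 1 ≤ d0 := by
          by_contra h
          have h0 : d0 = 0 := by omega
          rw [h0] at hd0
          exact hd0 (by simpa using hidx (w.getVert q))
        have hmin : ∀ d', d' < d0 → w.getVert (q + d') ∈ C (idx (w.getVert q)) :=
          fun d' h => not_not.mp (Nat.find_min hexit h)
        have hd0le : d0 ≤ w.length - q := by
          apply Nat.find_le
          rw [show q + (w.length - q) = w.length by omega, w.getVert_length]
          exact fun hb' => hqidx (idx_eq hb').symm
        have hple : q + d0 ≤ w.length := by omega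
        have hu : w.getVert (q + d0 - 1) ∈ C (idx (w.getVert q)) := by
          have := hmin (d0 - 1) (by omega)
          rwa [show q + (d0 - 1) = q + d0 - 1 by omega] at this
        have hm : w.getVert (q + d0) ∈ C (idx (w.getVert (q + d0))) := hidx _
        have hmk : idx (w.getVert (q + d0)) ≠ idx (w.getVert q) := by
          intro h; rw [h] at hm; exact hd0 hm
        have hedist_uu' : G.edist (w.getVert (q + d0 - 1)) (w.getVert (q + d0)) ≤ 1 := by
          have := walk_edist_le' w (q + d0 - 1) 1
          rwa [show q + d0 - 1 + 1 = q + d0 by omega] at this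
        rcases lt_or_gt_of_ne hmk with hlt | hgt
        · -- cluster of exit vertex is earlier: u' ∈ X
          have hed1 : G.edist (w.getVert (q + d0)) (w.getVert (q + d0 - 1)) ≤ 2 := by
            rw [SimpleGraph.edist_comm]; exact le_trans hedist_uu' one_le_two
          have hu'X : w.getVert (q + d0) ∈ X := XofNear hm hu hlt hed1
          by_cases hpl : q + d0 < w.length
          swap
          · have : w.getVert (q + d0) = b := by
              rw [show q + d0 = w.length by omega]; exact w.getVert_length
            rw [this] at hu'X
            exact absurd hu'X hbX
          by_cases hu''X : w.getVert (q + d0 + 1) ∈ X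
          · exact ⟨q + d0, hpl, hu'X, hu''X⟩
          have hm'' : w.getVert (q + d0 + 1) ∈ C (idx (w.getVert (q + d0 + 1))) := hidx _
          have hedist_u_u'' : G.edist (w.getVert (q + d0 - 1)) (w.getVert (q + d0 + 1)) ≤ 2 := by
            have := walk_edist_le' w (q + d0 - 1) 2
            rwa [show q + d0 - 1 + 2 = q + d0 + 1 by omega] at this
          have hm''m : idx (w.getVert (q + d0 + 1)) ≠ idx (w.getVert (q + d0)) := by
            intro h
            rw [h] at hm''
            exact hu''X (XofNear hm'' hu hlt (by rwa [SimpleGraph.edist_comm] at hedist_u_u''))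
          by_cases hm''j : idx (w.getVert (q + d0 + 1)) = idx b
          · rcases lt_trichotomy (idx (w.getVert (q + d0))) (idx b) with h1 | h1 | h1
            · rcases lt_trichotomy (idx (w.getVert q)) (idx b) with h2 | h2 | h2
              · -- k' < j: u ∈ X via u''
                rw [hm''j] at hm''
                have huX : w.getVert (q + d0 - 1) ∈ X := XofNear hu hm'' h2 hedist_u_u''
                exact ⟨q + d0 - 1, by omega, huX, by
                  rw [show q + d0 - 1 + 1 = q + d0 by omega]; exact hu'X⟩
              · exact absurd h2 hqidx
              · -- j < k': u'' ∈ X, contradiction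
                rw [hm''j] at hm''
                exact absurd (XofNear hm'' hu h2
                  (by rwa [SimpleGraph.edist_comm] at hedist_u_u'')) hu''X
            · exact absurd (hm''j.trans h1.symm) hm''m
            · -- j < m: u'' ∈ X via u', contradiction
              rw [hm''j] at hm''
              have hed : G.edist (w.getVert (q + d0 + 1)) (w.getVert (q + d0)) ≤ 2 := by
                have := walk_edist_le' w (q + d0) 1
                rw [SimpleGraph.edist_comm]
                exact le_trans this (by norm_num)
              exact absurd (XofNear hm'' hm h1 hed) hu''X
          · -- recurse on shorter tail
            exact ih (q + d0 + 1) (by omega) (by omega) hu''X hm''j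
        · -- cluster of exit vertex is later: u and possibly u2 in X
          obtain ⟨r, _, _, _, _, _, _, hLeq⟩ := htaken (idx (w.getVert q)) ⟨_, hu⟩
          have hu'L : w.getVert (q + d0) ∈ L (idx (w.getVert q)).succ :=
            hmono _ _ (fin_succ_le_castSucc hgt) (hCL _ hm)
          rw [hLeq] at hu'L
          have huX : w.getVert (q + d0 - 1) ∈ X :=
            memX hu hu'L.1 hu'L.2 (le_trans hedist_uu' (by norm_num) |>.trans_eq' (by
              rw [SimpleGraph.edist_comm]))
          rcases Nat.lt_or_ge d0 2 with hd2 | hd2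
          · have hpe : q + d0 - 1 = q := by omega
            rw [hpe] at huX
            exact absurd huX hqX
          · have hu2 : w.getVert (q + d0 - 2) ∈ C (idx (w.getVert q)) := by
              have := hmin (d0 - 2) (by omega)
              rwa [show q + (d0 - 2) = q + d0 - 2 by omega] at this
            have hed2 : G.edist (w.getVert (q + d0)) (w.getVert (q + d0 - 2)) ≤ 2 := by
              have := walk_edist_le' w (q + d0 - 2) 2
              rw [show q + d0 - 2 + 2 = q + d0 by omega] at this
              rwa [SimpleGraph.edist_comm]
            have hu2X : w.getVert (q + d0 - 2) ∈ X := memX hu2 hu'L.1 hu'L.2 hed2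
            exact ⟨q + d0 - 2, by omega, hu2X, by
              rw [show q + d0 - 2 + 1 = q + d0 - 1 by omega]; exact huX⟩
    have h0 : w.getVert 0 = a := w.getVert_zero
    refine key w.length 0 (by omega) (by omega) ?_ ?_
    · rw [h0]; exact haX
    · rw [h0]; exact hiab
  · -- diameter
    rintro Cl ⟨hne, i, rfl⟩ x hx y hy
    obtain ⟨r, _, _, hr2, _, hCeq, _, _⟩ := htaken i hne
    rw [hCeq] at hx hy
    have h1 : G.edist (v i) x ≤ (r : ℕ∞) := hx.1
    have h2 : G.edist (v i) y ≤ (r : ℕ∞) := hy.1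
    calc G.edist x y ≤ G.edist x (v i) + G.edist (v i) y := SimpleGraph.edist_triangle
      _ = G.edist (v i) x + G.edist (v i) y := by rw [SimpleGraph.edist_comm]
      _ ≤ (r : ℕ∞) + (r : ℕ∞) := add_le_add h1 h2
      _ = ((r + r : ℕ) : ℕ∞) := by push_cast; ring
      _ ≤ ((16 * t * Nat.clog 2 (Fintype.card V) : ℕ) : ℕ∞) := by
          refine Nat.cast_le.mpr ?_
          calc r + r ≤ 8 * t * Nat.clog 2 (Fintype.card V) + 8 * t * Nat.clog 2 (Fintype.card V) :=
                Nat.add_le_add hr2 hr2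
            _ = 16 * t * Nat.clog 2 (Fintype.card V) := by ring
  · -- cost ratio
    rintro Cl ⟨hne, i, rfl⟩
    obtain ⟨r, _, hr1, _, hgrow, hCeq, _, _⟩ := htaken i hne
    set A := sball G (v i) r ∩ L i.castSucc with hA
    set B := sball G (v i) (r - 2) ∩ L i.castSucc with hB
    have hBA : B ⊆ A := by
      apply Set.inter_subset_inter_left
      intro u hu
      show G.edist (v i) u ≤ (r : ℕ∞)
      exact le_trans (show G.edist (v i) u ≤ ((r - 2 : ℕ) : ℕ∞) from hu)
        (Nat.cast_le.mpr (Nat.sub_le r 2))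
    have hsub2 : C i ∩ X ⊆ A \ B := by
      rintro u ⟨hu1, hu2⟩
      obtain ⟨x, hx1, hx2, hx3⟩ := Xinv hu1 hu2
      refine ⟨by rw [← hCeq]; exact hu1, ?_⟩
      intro hBmem
      apply hx2
      rw [hCeq]
      refine ⟨?_, hx1⟩
      show G.edist (v i) x ≤ (r : ℕ∞)
      calc G.edist (v i) x ≤ G.edist (v i) u + G.edist u x := SimpleGraph.edist_triangle
        _ ≤ ((r - 2 : ℕ) : ℕ∞) + 2 :=
            add_le_add hBmem.1 (by rwa [SimpleGraph.edist_comm] at hx3)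
        _ = (r : ℕ∞) := by
            rw [show (2 : ℕ∞) = ((2 : ℕ) : ℕ∞) by rfl, ← Nat.cast_add]
            congr 1
            omega
    have hfin : A.Finite := Set.toFinite _
    have h1 : (C i ∩ X).ncard ≤ (A \ B).ncard :=
      Set.ncard_le_ncard hsub2 (Set.toFinite _)
    have h2 : (A \ B).ncard = A.ncard - B.ncard := Set.ncard_diff hBA
    have h3 : B.ncard ≤ A.ncard := Set.ncard_le_ncard hBA hfin
    have hcast : ((A \ B).ncard : ℝ) = (A.ncard : ℝ) - (B.ncard : ℝ) := by
      rw [h2]; exact Nat.cast_sub h3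
    have htpos : (0 : ℝ) < (t : ℝ) := by exact_mod_cast ht
    have hBle : (B.ncard : ℝ) ≤ (A.ncard : ℝ) := Nat.cast_le.mpr h3
    have hABr : (A.ncard : ℝ) ≤ (1 + 1 / (t : ℝ)) * (B.ncard : ℝ) := hgrow
    have hmul : (1 / (t : ℝ)) * (B.ncard : ℝ) ≤ (1 / (t : ℝ)) * (A.ncard : ℝ) := by
      apply mul_le_mul_of_nonneg_left hBle
      positivity
    have hfinal : ((C i ∩ X).ncard : ℝ) ≤ (1 / (t : ℝ)) * (A.ncard : ℝ) := by
      have hc1 : ((C i ∩ X).ncard : ℝ) ≤ ((A \ B).ncard : ℝ) := Nat.cast_le.mpr h1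
      rw [hcast] at hc1
      nlinarith
    rw [hCeq] at hfinal
    rw [hCeq]
    exact hfinal
end

section
/- Let G = (V,E) be a finite simple graph, let t > 0 and β > 0 be real numbers, and suppose μ is a finitely supported probability distribution over partitions of V such that every partition in the support of μ is weakly t-bounded (every part has weak diameter at most t), and for every vertex z ∈ V the probability under μ that B_2(z) ⊆ P(z) is at least 1 − 2β/t, where P(z) denotes the part of the sampled partition P containing z. Then for every nonempty subset L ⊆ V there exists a nonempty set C ⊆ L with weak diameter at most t such that |C ∩ B_2(L \ C)| ≤ (2β/t)·|C|. -/
open scoped Classical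

open SimpleGraph

variable {V : Type*}

/-- The shortest-path distance from `u` to `x` is finite and at most the real number `t`. -/
def edistLE (G : SimpleGraph V) (u x : V) (t : ℝ) : Prop :=
  ∃ m : ℕ, G.edist u x = (m : ℕ∞) ∧ (m : ℝ) ≤ t

theorem stmt9 [Fintype V] (G : SimpleGraph V) (t β : ℝ) (ht : 0 < t) (hβ : 0 < β)
    {ι : Type*} [Fintype ι] (w : ι → ℝ) (Ps : ι → Set (Set V))
    (hw0 : ∀ i, 0 ≤ w i) (hw1 : ∑ i, w i = 1)
    (hpart : ∀ i, w i ≠ 0 → Setoid.IsPartition (Ps i))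
    (hdiam : ∀ i, w i ≠ 0 → ∀ P ∈ Ps i, ∀ u ∈ P, ∀ x ∈ P, edistLE G u x t)
    (hpad : ∀ z : V, 1 - 2 * β / t ≤
      ∑ i ∈ Finset.univ.filter (fun i => ∀ P ∈ Ps i, z ∈ P → sball G z 2 ⊆ P), w i)
    (L : Set V) (hL : L.Nonempty) :
    ∃ C : Set V, C ⊆ L ∧ C.Nonempty ∧ (∀ u ∈ C, ∀ x ∈ C, edistLE G u x t) ∧
      ((C ∩ setBall G (L \ C) 2).ncard : ℝ) ≤ (2 * β / t) * (C.ncard : ℝ) := by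
  classical
  set c := 2 * β / t with hcdef
  have hc : 0 ≤ c := by positivity
  by_contra hcon
  push_neg at hcon
  set Lf : Finset V := L.toFinset with hLfdef
  have hLmem : ∀ z, z ∈ Lf ↔ z ∈ L := fun z => Set.mem_toFinset
  -- Step A : per-vertex bad mass is at most c
  have stepA : ∀ z : V,
      ∑ i ∈ Finset.univ.filter (fun i => ¬ ∀ P ∈ Ps i, z ∈ P → sball G z 2 ⊆ P), w i ≤ c := by
    intro z
    have h2 := Finset.sum_filter_add_sum_filter_not Finset.univ
      (fun i => ∀ P ∈ Ps i, z ∈ P → sball G z 2 ⊆ P) w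
    have h1 := hpad z
    rw [hw1] at h2
    linarith
  -- bad count for each partition
  set cnt : ι → ℝ := fun i =>
    ((Lf.filter (fun z => ¬ ∀ P ∈ Ps i, z ∈ P → sball G z 2 ⊆ P)).card : ℝ) with hcnt
  -- key : for every i in the support, the bad count exceeds c * |L|
  have key : ∀ i, w i ≠ 0 → c * (Lf.card : ℝ) < cnt i := by
    intro i hi
    obtain ⟨hne, hcov⟩ := hpart i hi
    choose f hf using fun z => (hcov z).exists
    have funiq : ∀ z P, P ∈ Ps i → z ∈ P → f z = P := by
      intro z P hP hzP
      exact (hcov z).unique ⟨(hf z).1, (hf z).2⟩ ⟨hP, hzP⟩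
    set T : Finset (Set V) := (Ps i).toFinset with hT
    have hmemT : ∀ z ∈ Lf, f z ∈ T := fun z _ => Set.mem_toFinset.2 (hf z).1
    have hcard1 : Lf.card = ∑ P ∈ T, (Lf.filter (fun z => f z = P)).card :=
      Finset.card_eq_sum_card_fiberwise hmemT
    have hcard2 : (Lf.filter (fun z => ¬ ∀ P ∈ Ps i, z ∈ P → sball G z 2 ⊆ P)).card
        = ∑ P ∈ T, ((Lf.filter (fun z => ¬ ∀ P ∈ Ps i, z ∈ P → sball G z 2 ⊆ P)).filter
            (fun z => f z = P)).card :=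
      Finset.card_eq_sum_card_fiberwise (fun z hz => hmemT z (Finset.mem_filter.1 hz).1)
    -- per-fiber bound
    have fiber_le : ∀ P ∈ T,
        c * ((Lf.filter (fun z => f z = P)).card : ℝ)
          ≤ (((Lf.filter (fun z => ¬ ∀ P ∈ Ps i, z ∈ P → sball G z 2 ⊆ P)).filter
              (fun z => f z = P)).card : ℝ) ∧
        ((Lf.filter (fun z => f z = P)).Nonempty →
          c * ((Lf.filter (fun z => f z = P)).card : ℝ)
            < (((Lf.filter (fun z => ¬ ∀ P ∈ Ps i, z ∈ P → sball G z 2 ⊆ P)).filter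
                (fun z => f z = P)).card : ℝ)) := by
      intro P hPT
      have hPs : P ∈ Ps i := Set.mem_toFinset.1 hPT
      have hstrict : (Lf.filter (fun z => f z = P)).Nonempty →
          c * ((Lf.filter (fun z => f z = P)).card : ℝ)
            < (((Lf.filter (fun z => ¬ ∀ P ∈ Ps i, z ∈ P → sball G z 2 ⊆ P)).filter
                (fun z => f z = P)).card : ℝ) := by
        intro hnon
        set C : Set V := ↑(Lf.filter (fun z => f z = P)) with hC
        have hCmem : ∀ z, z ∈ C ↔ z ∈ L ∧ f z = P := by
          intro z
          simp only [hC, Finset.coe_filter, Set.mem_setOf_eq, hLmem]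
        have hCL : C ⊆ L := fun z hz => ((hCmem z).1 hz).1
        have hCne : C.Nonempty := by
          obtain ⟨z, hz⟩ := hnon
          exact ⟨z, by exact_mod_cast hz⟩
        have hCP : ∀ z ∈ C, z ∈ P := by
          intro z hz
          have := ((hCmem z).1 hz).2
          rw [← this]; exact (hf z).2
        have hdiamC : ∀ u ∈ C, ∀ x ∈ C, edistLE G u x t := fun u hu x hx =>
          hdiam i hi P hPs u (hCP u hu) x (hCP x hx)
        have h' := hcon C hCL hCne hdiamC
        -- the intersection is contained in the bad fiber
        have hsub : C ∩ setBall G (L \ C) 2 ⊆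
            ↑((Lf.filter (fun z => ¬ ∀ P ∈ Ps i, z ∈ P → sball G z 2 ⊆ P)).filter
              (fun z => f z = P)) := by
          rintro z ⟨hzC, v, hvLC, hvdist⟩
          have hzL : z ∈ L := hCL hzC
          have hzP : f z = P := ((hCmem z).1 hzC).2
          have hbad : ¬ ∀ P' ∈ Ps i, z ∈ P' → sball G z 2 ⊆ P' := by
            intro hall
            have hzinP : z ∈ P := hCP z hzC
            have hballP : sball G z 2 ⊆ P := hall P hPs hzinP
            have hvball : v ∈ sball G z 2 := by
              simp only [sball, Set.mem_setOf_eq]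
              rw [SimpleGraph.edist_comm]
              exact hvdist
            have hvP : v ∈ P := hballP hvball
            have hfv : f v = P := funiq v P hPs hvP
            exact hvLC.2 ((hCmem v).2 ⟨hvLC.1, hfv⟩)
          simp only [Finset.coe_filter, Finset.mem_filter, Set.mem_setOf_eq, hLmem]
          exact ⟨⟨hzL, hbad⟩, hzP⟩
        have hcardle : ((C ∩ setBall G (L \ C) 2).ncard : ℝ)
            ≤ (((Lf.filter (fun z => ¬ ∀ P ∈ Ps i, z ∈ P → sball G z 2 ⊆ P)).filter
                (fun z => f z = P)).card : ℝ) := by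
          have := Set.ncard_le_ncard hsub (Set.toFinite _)
          rw [Set.ncard_coe_finset] at this
          exact_mod_cast this
        have hCcard : (C.ncard : ℝ) = ((Lf.filter (fun z => f z = P)).card : ℝ) := by
          rw [hC, Set.ncard_coe_finset]
        calc c * ((Lf.filter (fun z => f z = P)).card : ℝ)
            = c * (C.ncard : ℝ) := by rw [hCcard]
          _ < ((C ∩ setBall G (L \ C) 2).ncard : ℝ) := h'
          _ ≤ _ := hcardle
      constructor
      · rcases (Lf.filter (fun z => f z = P)).eq_empty_or_nonempty with he | hne'
        · rw [he]; simp
        · exact le_of_lt (hstrict hne')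
      · exact hstrict
    -- there is a nonempty fiber
    obtain ⟨z0, hz0⟩ := hL
    have hz0Lf : z0 ∈ Lf := (hLmem z0).2 hz0
    have hP0T : f z0 ∈ T := hmemT z0 hz0Lf
    have hfib0 : (Lf.filter (fun z => f z = f z0)).Nonempty :=
      ⟨z0, Finset.mem_filter.2 ⟨hz0Lf, rfl⟩⟩
    have hsum : ∑ P ∈ T, c * ((Lf.filter (fun z => f z = P)).card : ℝ)
        < ∑ P ∈ T, (((Lf.filter (fun z => ¬ ∀ P ∈ Ps i, z ∈ P → sball G z 2 ⊆ P)).filter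
            (fun z => f z = P)).card : ℝ) :=
      Finset.sum_lt_sum (fun P hP => (fiber_le P hP).1)
        ⟨f z0, hP0T, (fiber_le (f z0) hP0T).2 hfib0⟩
    have hL1 : c * (Lf.card : ℝ) = ∑ P ∈ T, c * ((Lf.filter (fun z => f z = P)).card : ℝ) := by
      rw [← Finset.mul_sum]
      congr 1
      rw [hcard1]
      push_cast
      ring
    have hL2 : cnt i = ∑ P ∈ T,
        (((Lf.filter (fun z => ¬ ∀ P ∈ Ps i, z ∈ P → sball G z 2 ⊆ P)).filter
          (fun z => f z = P)).card : ℝ) := by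
      have hdefeq : cnt i
          = ((Lf.filter (fun z => ¬ ∀ P ∈ Ps i, z ∈ P → sball G z 2 ⊆ P)).card : ℝ) := rfl
      rw [hdefeq, hcard2]
      push_cast
      ring
    rw [hL1, hL2]
    exact hsum
  -- upper bound on the average bad count
  have hupper : ∑ i, w i * cnt i ≤ c * (Lf.card : ℝ) := by
    have hrw : ∀ i, cnt i = ∑ z ∈ Lf,
        (if ¬ ∀ P ∈ Ps i, z ∈ P → sball G z 2 ⊆ P then (1 : ℝ) else 0) := by
      intro i
      rw [Finset.sum_boole]
    calc ∑ i, w i * cnt i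
        = ∑ i, ∑ z ∈ Lf, w i *
            (if ¬ ∀ P ∈ Ps i, z ∈ P → sball G z 2 ⊆ P then (1 : ℝ) else 0) := by
          refine Finset.sum_congr rfl fun i _ => ?_
          rw [hrw i, Finset.mul_sum]
      _ = ∑ z ∈ Lf, ∑ i, w i *
            (if ¬ ∀ P ∈ Ps i, z ∈ P → sball G z 2 ⊆ P then (1 : ℝ) else 0) :=
          Finset.sum_comm
      _ ≤ ∑ _z ∈ Lf, c := by
          refine Finset.sum_le_sum fun z _ => ?_
          have heq : ∑ i, w i *
              (if ¬ ∀ P ∈ Ps i, z ∈ P → sball G z 2 ⊆ P then (1 : ℝ) else 0)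
              = ∑ i ∈ Finset.univ.filter
                  (fun i => ¬ ∀ P ∈ Ps i, z ∈ P → sball G z 2 ⊆ P), w i := by
            rw [Finset.sum_filter]
            refine Finset.sum_congr rfl fun i _ => ?_
            split <;> ring
          rw [heq]
          exact stepA z
      _ = c * (Lf.card : ℝ) := by
          rw [Finset.sum_const, nsmul_eq_mul, mul_comm]
  -- lower bound
  have hex : ∃ i0, w i0 ≠ 0 := by
    by_contra hno
    push_neg at hno
    rw [Finset.sum_congr rfl (fun i _ => hno i)] at hw1
    simp at hw1
  obtain ⟨i0, hi0⟩ := hex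
  have hlow : c * (Lf.card : ℝ) < ∑ i, w i * cnt i := by
    have h0 : ∀ i ∈ Finset.univ, w i * (c * (Lf.card : ℝ)) ≤ w i * cnt i := by
      intro i _
      rcases eq_or_ne (w i) 0 with h | h
      · simp [h]
      · exact mul_le_mul_of_nonneg_left (le_of_lt (key i h)) (hw0 i)
    have hstrict : w i0 * (c * (Lf.card : ℝ)) < w i0 * cnt i0 :=
      mul_lt_mul_of_pos_left (key i0 hi0) (lt_of_le_of_ne (hw0 i0) (Ne.symm hi0))
    calc c * (Lf.card : ℝ) = ∑ i, w i * (c * (Lf.card : ℝ)) := by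
          rw [← Finset.sum_mul, hw1, one_mul]
      _ < ∑ i, w i * cnt i :=
          Finset.sum_lt_sum h0 ⟨i0, Finset.mem_univ i0, hstrict⟩
  linarith
end

section
/- Let G = (V,E) be a finite simple graph, let t > 0 and β > 0 be real numbers, and suppose μ is a finitely supported probability distribution over partitions of V such that every partition in the support of μ is weakly t-bounded (every part has weak diameter at most t), and for every vertex z ∈ V the probability under μ that B_2(z) ⊆ P(z) is at least 1 − 2β/t, where P(z) denotes the part of the sampled partition P containing z. Then V admits an ordered partition C_1, …, C_k into nonempty clusters, each of weak diameter at most t, with (2β/t)-cluster-degeneracy, i.e., for every i, |{ v ∈ C_i : dist_G(v, V \ (C_1 ∪ … ∪ C_i)) ≤ 2 }| ≤ (2β/t)·|C_i|. -/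
open scoped Classical

open SimpleGraph

variable {V : Type*}

/-!
Sampling a partition `𝒫` from `μ`, the expected number of unpadded vertices `z` (those with
`B₂(z) ⊄ 𝒫(z)`) in any vertex set `S` is at most `ε |S|` with `ε = 2β/t`, so some partition in the
support has at most that many. Every vertex of a cluster `S ∩ P` (`P ∈ 𝒫`) lying within distance 2
of `S \ P` is unpadded, hence the total size of these rims is at most `ε |S| = ε ∑ |S ∩ P|`, and
some nonempty cluster has rim at most `ε` times its size. Peeling such a cluster off `S = V` and
recursing on the rest yields the ordered partition.
-/

section Averaging

variable {ι : Type*} [Fintype ι] {w : ι → ℝ}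

theorem exists_ne_zero_and_le_of_sum_mul_le (hw0 : ∀ i, 0 ≤ w i) (hw1 : ∑ i, w i = 1)
    {f : ι → ℝ} {c : ℝ} (h : ∑ i, w i * f i ≤ c) : ∃ i, w i ≠ 0 ∧ f i ≤ c := by
  set s := Finset.univ.filter fun i => w i ≠ 0
  have hs : s.Nonempty := by
    rw [Finset.filter_nonempty_iff]
    by_contra! hzero
    simp [Finset.sum_eq_zero fun i _ => hzero i (Finset.mem_univ i)] at hw1
  have hsum : ∑ i ∈ s, w i * f i ≤ ∑ i ∈ s, w i * c := by
    rwa [Finset.sum_filter_of_ne fun i _ => left_ne_zero_of_mul, ← Finset.sum_mul,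
      Finset.sum_filter_of_ne fun i _ => id, hw1, one_mul]
  obtain ⟨i, his, hi⟩ := Finset.exists_le_of_sum_le hs hsum
  have hwi : w i ≠ 0 := (Finset.mem_filter.mp his).2
  exact ⟨i, hwi, le_of_mul_le_mul_left hi ((hw0 i).lt_of_ne' hwi)⟩

theorem exists_ne_zero_and_card_filter_not_le {α : Type*} (hw0 : ∀ i, 0 ≤ w i)
    (hw1 : ∑ i, w i = 1) (good : ι → α → Prop) [∀ z, DecidablePred (good · z)] {ε : ℝ}
    (hgood : ∀ z, 1 - ε ≤ ∑ i ∈ Finset.univ.filter (good · z), w i) (S : Finset α) :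
    ∃ i, w i ≠ 0 ∧ ((S.filter (¬ good i ·)).card : ℝ) ≤ ε * S.card := by
  refine exists_ne_zero_and_le_of_sum_mul_le hw0 hw1 ?_
  have hbad : ∀ z, ∑ i ∈ Finset.univ.filter (¬ good · z), w i ≤ ε := fun z => by
    linarith [hgood z, Finset.sum_filter_add_sum_filter_not Finset.univ (good · z) w]
  calc ∑ i, w i * ((S.filter (¬ good i ·)).card : ℝ)
      = ∑ z ∈ S, ∑ i ∈ Finset.univ.filter (¬ good · z), w i := by
        simp only [Finset.card_filter, Nat.cast_sum, Nat.cast_ite, Nat.cast_one, Nat.cast_zero,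
          Finset.mul_sum, mul_ite, mul_one, mul_zero, Finset.sum_filter]
        exact Finset.sum_comm
    _ ≤ ∑ _z ∈ S, ε := Finset.sum_le_sum fun z _ => hbad z
    _ = ε * S.card := by rw [Finset.sum_const, nsmul_eq_mul, mul_comm]

end Averaging

section Peeling

variable {α : Type*} (R : α → α → Prop)

noncomputable def rim (S C : Finset α) : Finset α :=
  C.filter fun v => ∃ u ∈ S \ C, R v u

theorem exists_card_rim_fiber_le {β : Type*} (f : α → β) (bad : α → Prop) [DecidablePred bad]
    {S : Finset α} (hS : S.Nonempty) {ε : ℝ} (hbad : ((S.filter bad).card : ℝ) ≤ ε * S.card)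
    (hrim : ∀ v ∈ S, ∀ u ∈ S, R v u → f u ≠ f v → bad v) :
    ∃ v ∈ S, ((rim R S (S.filter (f · = f v))).card : ℝ) ≤ ε * (S.filter (f · = f v)).card := by
  set T := S.image f
  have hrim_sub : ∀ b, rim R S (S.filter (f · = b)) ⊆ (S.filter bad).filter (f · = b) := by
    intro b v hv
    simp only [rim, Finset.mem_filter, Finset.mem_sdiff, not_and] at hv ⊢
    obtain ⟨⟨hvS, hvb⟩, u, ⟨huS, hub⟩, hvu⟩ := hv
    exact ⟨⟨hvS, hrim v hvS u huS hvu (by rw [hvb]; exact hub huS)⟩, hvb⟩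
  have hsum : ∑ b ∈ T, ((rim R S (S.filter (f · = b))).card : ℝ)
      ≤ ∑ b ∈ T, ε * (S.filter (f · = b)).card :=
    calc ∑ b ∈ T, ((rim R S (S.filter (f · = b))).card : ℝ)
        ≤ ∑ b ∈ T, (((S.filter bad).filter (f · = b)).card : ℝ) :=
          Finset.sum_le_sum fun b _ => Nat.cast_le.mpr (Finset.card_le_card (hrim_sub b))
      _ = (S.filter bad).card := by
          rw [Finset.card_eq_sum_card_fiberwise fun v hv =>
            Finset.mem_image_of_mem f (Finset.mem_of_mem_filter v hv), Nat.cast_sum]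
      _ ≤ ε * S.card := hbad
      _ = ∑ b ∈ T, ε * (S.filter (f · = b)).card := by
          rw [← Finset.mul_sum, Finset.card_eq_sum_card_fiberwise fun v hv =>
            Finset.mem_image_of_mem f hv, Nat.cast_sum]
  obtain ⟨b, hbT, hb⟩ := Finset.exists_le_of_sum_le (hS.image f) hsum
  obtain ⟨v, hvS, rfl⟩ := Finset.mem_image.mp hbT
  exact ⟨v, hvS, hb⟩

/-- `card_le` bounds the rim of `C i` relative to `S \ (C 0 ∪ … ∪ C (i-1))`. -/
structure IsPeeling (ε : ℝ) (p : Finset α → Prop) (S : Finset α) {k : ℕ}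
    (C : Fin k → Finset α) : Prop where
  nonempty : ∀ i, (C i).Nonempty
  pairwise_disjoint : Pairwise (Function.onFun Disjoint C)
  mem_iff : ∀ v, v ∈ S ↔ ∃ i, v ∈ C i
  prop : ∀ i, p (C i)
  card_le : ∀ i, (((C i).filter fun v => ∃ u ∈ S, (∀ j ≤ i, u ∉ C j) ∧ R v u).card : ℝ)
    ≤ ε * (C i).card

variable {R} {ε : ℝ} {p : Finset α → Prop}

theorem isPeeling_empty : IsPeeling R ε p ∅ (Fin.elim0 : Fin 0 → Finset α) :=
  ⟨fun i => i.elim0, fun i => i.elim0, by simp, fun i => i.elim0, fun i => i.elim0⟩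

theorem IsPeeling.cons {S C₀ : Finset α} {k : ℕ} {C : Fin k → Finset α}
    (hC : IsPeeling R ε p (S \ C₀) C) (hC₀S : C₀ ⊆ S) (hC₀ : C₀.Nonempty) (hpC₀ : p C₀)
    (hrim : ((rim R S C₀).card : ℝ) ≤ ε * C₀.card) :
    IsPeeling R ε p S (Fin.cons C₀ C : Fin (k + 1) → Finset α) := by
  have hCS : ∀ j, ∀ v ∈ C j, v ∈ S ∧ v ∉ C₀ := fun j v hv =>
    Finset.mem_sdiff.mp ((hC.mem_iff v).mpr ⟨j, hv⟩)
  refine ⟨Fin.cases hC₀ hC.nonempty, ?_, fun v => ?_, Fin.cases hpC₀ hC.prop, ?_⟩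
  · have h₀ : ∀ j, Disjoint C₀ (C j) :=
      fun j => Finset.disjoint_right.mpr fun v hv => (hCS j v hv).2
    refine Fin.cases (Fin.cases (absurd rfl) fun j _ => ?_) fun i => Fin.cases (fun _ => ?_)
      fun j hij => ?_
    · simpa only [Function.onFun, Fin.cons_zero, Fin.cons_succ] using h₀ j
    · simpa only [Function.onFun, Fin.cons_zero, Fin.cons_succ] using (h₀ i).symm
    · simpa only [Function.onFun, Fin.cons_succ] using
        hC.pairwise_disjoint (Fin.succ_injective _ |>.ne_iff.mp hij)
  · simp only [Fin.exists_fin_succ, Fin.cons_zero, Fin.cons_succ, ← hC.mem_iff,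
      Finset.mem_sdiff]
    exact ⟨fun hv => (em (v ∈ C₀)).imp id fun h => ⟨hv, h⟩,
      fun h => h.elim (fun h => hC₀S h) And.left⟩
  · refine Fin.cases ?_ fun i => ?_
    · refine le_trans (Nat.cast_le.mpr (Finset.card_le_card ?_)) hrim
      intro v hv
      simp only [Finset.mem_filter, Fin.cons_zero, rim, Finset.mem_sdiff] at hv ⊢
      obtain ⟨hv, u, huS, hu, hvu⟩ := hv
      exact ⟨hv, u, ⟨huS, by simpa using hu 0 le_rfl⟩, hvu⟩
    · refine le_trans (Nat.cast_le.mpr (Finset.card_le_card ?_)) (by simpa using hC.card_le i)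
      intro v hv
      simp only [Finset.mem_filter, Fin.cons_succ] at hv ⊢
      obtain ⟨hv, u, huS, hu, hvu⟩ := hv
      refine ⟨hv, u, ⟨huS, by simpa using hu 0 (Fin.zero_le _)⟩, fun j hj => ?_, hvu⟩
      simpa using hu j.succ (Fin.succ_le_succ_iff.mpr hj)

theorem exists_isPeeling
    (h : ∀ S : Finset α, S.Nonempty →
      ∃ C ⊆ S, C.Nonempty ∧ p C ∧ ((rim R S C).card : ℝ) ≤ ε * C.card)
    (S : Finset α) : ∃ (k : ℕ) (C : Fin k → Finset α), IsPeeling R ε p S C := by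
  induction S using Finset.strongInduction with
  | H S ih =>
    rcases S.eq_empty_or_nonempty with rfl | hS
    · exact ⟨0, _, isPeeling_empty⟩
    obtain ⟨C₀, hC₀S, hC₀, hpC₀, hrim⟩ := h S hS
    obtain ⟨k, C, hC⟩ := ih (S \ C₀) (Finset.sdiff_ssubset hC₀S hC₀)
    exact ⟨k + 1, _, hC.cons hC₀S hC₀ hpC₀ hrim⟩

end Peeling

theorem exists_cluster_card_rim_le [Fintype V] (G : SimpleGraph V) (t β : ℝ)
    {ι : Type*} [Fintype ι] (w : ι → ℝ) (Ps : ι → Set (Set V))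
    (hw0 : ∀ i, 0 ≤ w i) (hw1 : ∑ i, w i = 1)
    (hpart : ∀ i, w i ≠ 0 → Setoid.IsPartition (Ps i))
    (hdiam : ∀ i, w i ≠ 0 → ∀ P ∈ Ps i, ∀ u ∈ P, ∀ x ∈ P, edistLE G u x t)
    (hpad : ∀ z : V, 1 - 2 * β / t ≤
      ∑ i ∈ Finset.univ.filter (fun i => ∀ P ∈ Ps i, z ∈ P → sball G z 2 ⊆ P), w i)
    {S : Finset V} (hS : S.Nonempty) :
    ∃ C ⊆ S, C.Nonempty ∧ (∀ u ∈ C, ∀ x ∈ C, edistLE G u x t) ∧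
      ((rim (fun v u => G.edist v u ≤ 2) S C).card : ℝ) ≤ 2 * β / t * C.card := by
  obtain ⟨i, hi, hfew⟩ := exists_ne_zero_and_card_filter_not_le hw0 hw1 _ hpad S
  choose part hpart_mem hmem_part using fun v => ((hpart i hi).2 v).exists
  have hpart_eq : ∀ {v P}, P ∈ Ps i → v ∈ P → P = part v := fun hP hvP =>
    ((hpart i hi).2 _).unique ⟨hP, hvP⟩ ⟨hpart_mem _, hmem_part _⟩
  obtain ⟨v, hvS, hv⟩ := exists_card_rim_fiber_le _ part _ hS hfew
    fun v _ u _ hvu hne hpadded => hne <| (hpart_eq (hpart_mem v)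
      (hpadded _ (hpart_mem v) (hmem_part v) (show G.edist v u ≤ (2 : ℕ) from hvu))).symm
  refine ⟨S.filter (part · = part v), Finset.filter_subset _ _,
    ⟨v, Finset.mem_filter.mpr ⟨hvS, rfl⟩⟩, fun u hu x hx => ?_, hv⟩
  have hmem : ∀ y ∈ S.filter (part · = part v), y ∈ part v := fun y hy =>
    (Finset.mem_filter.mp hy).2 ▸ hmem_part y
  exact hdiam i hi _ (hpart_mem v) u (hmem u hu) x (hmem x hx)

theorem stmt10_general [Fintype V] (G : SimpleGraph V) (t β : ℝ)
    {ι : Type*} [Fintype ι] (w : ι → ℝ) (Ps : ι → Set (Set V))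
    (hw0 : ∀ i, 0 ≤ w i) (hw1 : ∑ i, w i = 1)
    (hpart : ∀ i, w i ≠ 0 → Setoid.IsPartition (Ps i))
    (hdiam : ∀ i, w i ≠ 0 → ∀ P ∈ Ps i, ∀ u ∈ P, ∀ x ∈ P, edistLE G u x t)
    (hpad : ∀ z : V, 1 - 2 * β / t ≤
      ∑ i ∈ Finset.univ.filter (fun i => ∀ P ∈ Ps i, z ∈ P → sball G z 2 ⊆ P), w i) :
    ∃ (k : ℕ) (C : Fin k → Set V),
      (∀ i, (C i).Nonempty) ∧
      Pairwise (Function.onFun Disjoint C) ∧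
      (⋃ i, C i) = Set.univ ∧
      (∀ i, ∀ u ∈ C i, ∀ x ∈ C i, edistLE G u x t) ∧
      (∀ i, ((closeSet G C i).ncard : ℝ) ≤ (2 * β / t) * ((C i).ncard : ℝ)) := by
  obtain ⟨k, C, hC⟩ := exists_isPeeling
    (fun S hS => exists_cluster_card_rim_le G t β w Ps hw0 hw1 hpart hdiam hpad hS) Finset.univ
  refine ⟨k, fun i => C i, fun i => Finset.coe_nonempty.mpr (hC.nonempty i), ?_, ?_, hC.prop,
    fun i => ?_⟩
  · exact fun i j hij => Finset.disjoint_coe.mpr (hC.pairwise_disjoint hij)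
  · simpa [Set.eq_univ_iff_forall] using fun v => (hC.mem_iff v).mp (Finset.mem_univ v)
  · have hclose : closeSet G (fun i => (C i : Set V)) i = ↑((C i).filter fun v =>
        ∃ u ∈ Finset.univ, (∀ j ≤ i, u ∉ C j) ∧ G.edist v u ≤ 2) := by
      ext v
      simp [closeSet]
    rw [hclose, Set.ncard_coe_finset, Set.ncard_coe_finset]
    convert hC.card_le i using 4

theorem stmt10 [Fintype V] (G : SimpleGraph V) (t β : ℝ) (ht : 0 < t) (hβ : 0 < β)
    {ι : Type*} [Fintype ι] (w : ι → ℝ) (Ps : ι → Set (Set V))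
    (hw0 : ∀ i, 0 ≤ w i) (hw1 : ∑ i, w i = 1)
    (hpart : ∀ i, w i ≠ 0 → Setoid.IsPartition (Ps i))
    (hdiam : ∀ i, w i ≠ 0 → ∀ P ∈ Ps i, ∀ u ∈ P, ∀ x ∈ P, edistLE G u x t)
    (hpad : ∀ z : V, 1 - 2 * β / t ≤
      ∑ i ∈ Finset.univ.filter (fun i => ∀ P ∈ Ps i, z ∈ P → sball G z 2 ⊆ P), w i) :
    ∃ (k : ℕ) (C : Fin k → Set V),
      (∀ i, (C i).Nonempty) ∧
      Pairwise (Function.onFun Disjoint C) ∧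
      (⋃ i, C i) = Set.univ ∧
      (∀ i, ∀ u ∈ C i, ∀ x ∈ C i, edistLE G u x t) ∧
      (∀ i, ((closeSet G C i).ncard : ℝ) ≤ (2 * β / t) * ((C i).ncard : ℝ)) :=
  stmt10_general G t β w Ps hw0 hw1 hpart hdiam hpad
end

section
/- Let G = (V,E) be a finite simple graph, let t > 0 and β > 0 be real numbers with 2β/t ≤ 1, and suppose μ is a finitely supported probability distribution over partitions of V such that every partition in the support of μ is weakly t-bounded (every part has weak diameter at most t), and for every vertex z ∈ V the probability under μ that B_2(z) ⊆ P(z) is at least 1 − 2β/t, where P(z) denotes the part of the sampled partition P containing z. Then G has a (t, 2β/t)-Two-Separated partition. -/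
open scoped Classical

open SimpleGraph

variable {V : Type*}

/-- A `(t,ε)`-Two-Separated partition of `G`, with a real diameter bound `t`. -/
def IsTSPartitionR (G : SimpleGraph V) (t : ℝ) (ε : ℝ) (𝒞 : Set (Set V)) (X : Set V) : Prop :=
  Setoid.IsPartition 𝒞 ∧
  (∀ C ∈ 𝒞, ∀ D ∈ 𝒞, C ≠ D → ∀ a b : V, a ∈ C \ X → b ∈ D \ X →
    ∀ w : G.Walk a b, ∃ i : ℕ, i < w.length ∧ w.getVert i ∈ X ∧ w.getVert (i + 1) ∈ X) ∧
  (∀ C ∈ 𝒞, ∀ u ∈ C, ∀ x ∈ C, edistLE G u x t) ∧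
  (∀ C ∈ 𝒞, ((C ∩ X).ncard : ℝ) ≤ ε * (C.ncard : ℝ))

/-!
The partition is carved out greedily. Given the set `R` of vertices not yet clustered, averaging
over the distribution yields a partition in its support leaving at most an `ε`-fraction of `R`
unpadded, and averaging over its parts yields a part meeting `R` in a cluster `C` whose vertices
within distance `2` of `R \ C` are all unpadded, hence at most `ε |C|` of them. Ranking the
clusters in the order they are carved, let `X` be the set of vertices within distance `2` of a
higher-ranked vertex. A walk from a vertex outside `X` to a higher-ranked vertex must come within
distance `1` of a higher-ranked vertex for the first time somewhere, and that vertex and its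
predecessor both lie in `X`.
-/

open Finset

theorem exists_ne_zero_le_of_sum_mul_le {ι : Type*} [Fintype ι] {w f : ι → ℝ} {c : ℝ}
    (hw0 : ∀ i, 0 ≤ w i) (hw1 : ∑ i, w i = 1) (h : ∑ i, w i * f i ≤ c) :
    ∃ i, w i ≠ 0 ∧ f i ≤ c := by
  by_contra! hlt
  obtain ⟨i₀, -, hi₀⟩ := exists_ne_zero_of_sum_ne_zero (hw1 ▸ one_ne_zero : ∑ i, w i ≠ 0)
  have : ∑ i, w i * c < ∑ i, w i * f i := by
    refine sum_lt_sum (fun i _ => ?_) ⟨i₀, mem_univ _, ?_⟩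
    · rcases eq_or_ne (w i) 0 with hi | hi
      · simp [hi]
      · exact mul_le_mul_of_nonneg_left (hlt i hi).le (hw0 i)
    · exact mul_lt_mul_of_pos_left (hlt i₀ hi₀) ((hw0 i₀).lt_of_ne' hi₀)
  rw [← sum_mul, hw1, one_mul] at this
  linarith

theorem sum_mul_card_filter {ι α : Type*} [Fintype ι] (w : ι → ℝ) (R : Finset α)
    (p : ι → α → Prop) [∀ i, DecidablePred (p i)] [∀ z, DecidablePred (p · z)] :
    ∑ i, w i * #{z ∈ R | p i z} = ∑ z ∈ R, ∑ i with p i z, w i := by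
  simp only [card_filter, Nat.cast_sum, Nat.cast_ite, Nat.cast_one, Nat.cast_zero, mul_sum,
    mul_ite, mul_one, mul_zero, sum_filter]
  exact sum_comm

theorem exists_fiber_card_filter_le {α β : Type*} (f : α → β) {R : Finset α} (hR : R.Nonempty)
    (p : α → Prop) [DecidablePred p] {ε : ℝ} (h : (#{z ∈ R | p z} : ℝ) ≤ ε * #R) :
    ∃ z ∈ R, (#{v ∈ R | f v = f z ∧ p v} : ℝ) ≤ ε * #{v ∈ R | f v = f z} := by
  have hmaps : ∀ {S : Finset α}, S ⊆ R → Set.MapsTo f S (R.image f) :=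
    fun hS x hx => mem_image_of_mem f (hS hx)
  have hsum : ∑ b ∈ R.image f, (#{v ∈ R | f v = b ∧ p v} : ℝ) ≤
      ∑ b ∈ R.image f, ε * #{v ∈ R | f v = b} := by
    rw [← mul_sum]
    simp only [← Nat.cast_sum, ← card_eq_sum_card_fiberwise (hmaps subset_rfl)]
    rw [card_eq_sum_card_fiberwise (hmaps (filter_subset p R))] at h
    simpa only [filter_filter, and_comm] using h
  obtain ⟨b, hb, hle⟩ := exists_le_of_sum_le (hR.image f) hsum
  obtain ⟨z, hz, rfl⟩ := mem_image.mp hb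
  exact ⟨z, hz, hle⟩

def rankBoundary (G : SimpleGraph V) (r : V → ℕ) : Set V :=
  {v | ∃ u, G.edist v u ≤ 2 ∧ r v < r u}

theorem SimpleGraph.Walk.exists_consecutive_mem_rankBoundary_of_lt {G : SimpleGraph V}
    {r : V → ℕ} {a b : V} (w : G.Walk a b) (ha : a ∉ rankBoundary G r) (hab : r a < r b) :
    ∃ i < w.length, w.getVert i ∈ rankBoundary G r ∧ w.getVert (i + 1) ∈ rankBoundary G r := by
  -- The first vertex of `w` within distance `1` of a vertex ranked above `a` is not the start,
  -- and neither it nor its predecessor is ranked above `a`: both lie in the boundary.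
  have hend : ∃ u, G.edist (w.getVert w.length) u ≤ 1 ∧ r a < r u := ⟨b, by simp, hab⟩
  have hex : ∃ n, ∃ u, G.edist (w.getVert n) u ≤ 1 ∧ r a < r u := ⟨_, hend⟩
  obtain ⟨u, hu, hru⟩ := Nat.find_spec hex
  have hle : Nat.find hex ≤ w.length := Nat.find_min' hex hend
  obtain ⟨i, hi⟩ : ∃ i, Nat.find hex = i + 1 := by
    refine Nat.exists_eq_succ_of_ne_zero fun h0 => ha ⟨u, ?_, hru⟩
    rw [h0, w.getVert_zero] at hu
    exact hu.trans (by norm_num)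
  rw [hi] at hu hle
  have hfar : ¬ ∃ u, G.edist (w.getVert i) u ≤ 1 ∧ r a < r u := Nat.find_min hex (by omega)
  have hstep : G.edist (w.getVert i) (w.getVert (i + 1)) = 1 :=
    edist_eq_one_iff_adj.mpr (w.adj_getVert_succ (by omega))
  have hri : r (w.getVert i) ≤ r a := by
    by_contra! h; exact hfar ⟨_, by simp, h⟩
  have hri' : r (w.getVert (i + 1)) ≤ r a := by
    by_contra! h; exact hfar ⟨_, hstep.le, h⟩
  refine ⟨i, by omega, ⟨u, ?_, by omega⟩, ⟨u, hu.trans (by norm_num), by omega⟩⟩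
  calc G.edist (w.getVert i) u ≤ G.edist (w.getVert i) (w.getVert (i + 1)) + G.edist _ u :=
        G.edist_triangle
    _ ≤ 1 + 1 := by rw [hstep]; gcongr
    _ = 2 := by norm_num

theorem SimpleGraph.Walk.exists_consecutive_mem_rankBoundary_of_ne {G : SimpleGraph V} {r : V → ℕ}
    {a b : V} (w : G.Walk a b) (ha : a ∉ rankBoundary G r) (hb : b ∉ rankBoundary G r)
    (hab : r a ≠ r b) :
    ∃ i < w.length, w.getVert i ∈ rankBoundary G r ∧ w.getVert (i + 1) ∈ rankBoundary G r := by
  rcases hab.lt_or_gt with hab | hab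
  · exact w.exists_consecutive_mem_rankBoundary_of_lt ha hab
  · obtain ⟨i, hi, h₁, h₂⟩ := w.reverse.exists_consecutive_mem_rankBoundary_of_lt hb hab
    rw [Walk.length_reverse] at hi
    rw [Walk.getVert_reverse] at h₁ h₂
    refine ⟨w.length - (i + 1), by omega, h₂, ?_⟩
    rwa [show w.length - (i + 1) + 1 = w.length - i by omega]

def IsGoodRanking (G : SimpleGraph V) (t ε : ℝ) (R : Finset V) (r : V → ℕ) : Prop :=
  (∀ u ∈ R, ∀ x ∈ R, r u = r x → edistLE G u x t) ∧
  ∀ k, (#{v ∈ R | r v = k ∧ ∃ u ∈ R, G.edist v u ≤ 2 ∧ k < r u} : ℝ) ≤ ε * #{v ∈ R | r v = k}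

theorem isTSPartitionR_of_isGoodRanking [Fintype V] {G : SimpleGraph V} {t ε : ℝ} {r : V → ℕ}
    (h : IsGoodRanking G t ε univ r) :
    IsTSPartitionR G t ε (Setoid.ker r).classes (rankBoundary G r) := by
  refine ⟨Setoid.isPartition_classes _, ?_, ?_, ?_⟩
  · rintro _ ⟨y, rfl⟩ _ ⟨y', rfl⟩ hne a b ⟨ha, haX⟩ ⟨hb, hbX⟩ w
    refine w.exists_consecutive_mem_rankBoundary_of_ne haX hbX fun hab => hne ?_
    simp only [Set.mem_ofPred_eq, Setoid.ker_def] at ha hb ⊢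
    simp only [← ha, hab, hb]
  · rintro _ ⟨y, rfl⟩ u hu x hx
    simp only [Set.mem_ofPred_eq, Setoid.ker_def] at hu hx
    exact h.1 u (mem_univ _) x (mem_univ _) (hu.trans hx.symm)
  · rintro _ ⟨y, rfl⟩
    convert h.2 (r y) using 3 <;> rw [← Set.ncard_coe_finset] <;> congr 1 <;> ext v <;>
      simp +contextual [rankBoundary, Setoid.ker_def]

theorem IsGoodRanking.extend {G : SimpleGraph V} {t ε : ℝ} {R C : Finset V} {r : V → ℕ}
    (hCR : C ⊆ R) (hCdiam : ∀ u ∈ C, ∀ x ∈ C, edistLE G u x t)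
    (hCcost : (#{v ∈ C | ∃ u ∈ R \ C, G.edist v u ≤ 2} : ℝ) ≤ ε * #C)
    (hr : IsGoodRanking G t ε (R \ C) r) :
    IsGoodRanking G t ε R (fun v => if v ∈ C then 0 else r v + 1) := by
  refine ⟨fun u hu x hx hux => ?_, fun k => ?_⟩
  · by_cases huC : u ∈ C <;> by_cases hxC : x ∈ C <;>
      simp only [huC, hxC, ↓reduceIte] at hux
    · exact hCdiam u huC x hxC
    · omega
    · omega
    · exact hr.1 u (mem_sdiff.mpr ⟨hu, huC⟩) x (mem_sdiff.mpr ⟨hx, hxC⟩) (by omega)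
  · cases k with
    | zero =>
      have hlayer : {v ∈ R | (if v ∈ C then 0 else r v + 1) = 0} = C := by
        ext v; grind
      have hbdry : {v ∈ R | (if v ∈ C then 0 else r v + 1) = 0 ∧
          ∃ u ∈ R, G.edist v u ≤ 2 ∧ 0 < if u ∈ C then 0 else r u + 1} =
          {v ∈ C | ∃ u ∈ R \ C, G.edist v u ≤ 2} := by
        ext v; grind
      rw [hlayer, hbdry]; exact hCcost
    | succ k =>
      have hlayer : {v ∈ R | (if v ∈ C then 0 else r v + 1) = k + 1} = {v ∈ R \ C | r v = k} := by
        ext v; grind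
      have hbdry : {v ∈ R | (if v ∈ C then 0 else r v + 1) = k + 1 ∧
          ∃ u ∈ R, G.edist v u ≤ 2 ∧ k + 1 < if u ∈ C then 0 else r u + 1} =
          {v ∈ R \ C | r v = k ∧ ∃ u ∈ R \ C, G.edist v u ≤ 2 ∧ k < r u} := by
        ext v; grind
      rw [hlayer, hbdry]; exact hr.2 k

def IsPadded (G : SimpleGraph V) (Ps : Set (Set V)) (z : V) : Prop :=
  ∀ P ∈ Ps, z ∈ P → sball G z 2 ⊆ P

structure IsPaddedDistribution {ι : Type*} [Fintype ι] (G : SimpleGraph V) (t ε : ℝ)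
    (w : ι → ℝ) (Ps : ι → Set (Set V)) : Prop where
  nonneg : ∀ i, 0 ≤ w i
  sum_eq_one : ∑ i, w i = 1
  isPartition : ∀ i, w i ≠ 0 → Setoid.IsPartition (Ps i)
  diam_le : ∀ i, w i ≠ 0 → ∀ P ∈ Ps i, ∀ u ∈ P, ∀ x ∈ P, edistLE G u x t
  padded : ∀ z, 1 - ε ≤ ∑ i with IsPadded G (Ps i) z, w i

namespace IsPaddedDistribution

variable {ι : Type*} [Fintype ι] {G : SimpleGraph V} {t ε : ℝ} {w : ι → ℝ}
  {Ps : ι → Set (Set V)}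

theorem sum_not_padded_le (hμ : IsPaddedDistribution G t ε w Ps) (z : V) :
    ∑ i with ¬ IsPadded G (Ps i) z, w i ≤ ε := by
  have := sum_filter_add_sum_filter_not univ (fun i => IsPadded G (Ps i) z) w
  linarith [hμ.padded z, hμ.sum_eq_one]

theorem exists_card_not_padded_le (hμ : IsPaddedDistribution G t ε w Ps) (R : Finset V) :
    ∃ i, w i ≠ 0 ∧ (#{z ∈ R | ¬ IsPadded G (Ps i) z} : ℝ) ≤ ε * #R := by
  refine exists_ne_zero_le_of_sum_mul_le hμ.nonneg hμ.sum_eq_one ?_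
  calc ∑ i, w i * #{z ∈ R | ¬ IsPadded G (Ps i) z}
      = ∑ z ∈ R, ∑ i with ¬ IsPadded G (Ps i) z, w i :=
        sum_mul_card_filter w R _
    _ ≤ ∑ _z ∈ R, ε := sum_le_sum fun z _ => hμ.sum_not_padded_le z
    _ = ε * #R := by rw [sum_const, nsmul_eq_mul, mul_comm]

theorem exists_cluster (hμ : IsPaddedDistribution G t ε w Ps) {R : Finset V} (hR : R.Nonempty) :
    ∃ C ⊆ R, C.Nonempty ∧ (∀ u ∈ C, ∀ x ∈ C, edistLE G u x t) ∧
      (#{v ∈ C | ∃ u ∈ R \ C, G.edist v u ≤ 2} : ℝ) ≤ ε * #C := by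
  obtain ⟨i, hi, hbad⟩ := hμ.exists_card_not_padded_le R
  have hP := hμ.isPartition i hi
  choose part hpart using fun z => (hP.2 z).exists
  have hpart_eq : ∀ {z P}, P ∈ Ps i → z ∈ P → P = part z :=
    fun hP' hz => (hP.2 _).unique ⟨hP', hz⟩ (hpart _)
  obtain ⟨z, hz, hcost⟩ := exists_fiber_card_filter_le part hR _ hbad
  refine ⟨{v ∈ R | part v = part z}, filter_subset _ _, ⟨z, by simp [hz]⟩, ?_, ?_⟩
  · intro u hu x hx
    simp only [mem_filter] at hu hx
    exact hμ.diam_le i hi _ (hpart z).1 u (hu.2 ▸ (hpart u).2) x (hx.2 ▸ (hpart x).2)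
  · refine le_trans ?_ hcost
    gcongr
    intro v
    simp only [mem_filter, mem_sdiff]
    rintro ⟨⟨hvR, hvz⟩, u, ⟨huR, huz⟩, hvu⟩
    refine ⟨hvR, hvz, fun hv => huz ⟨huR, ?_⟩⟩
    have hu : u ∈ part v := hv _ (hpart v).1 (hpart v).2 (by simpa [sball] using hvu)
    rw [← hvz, hpart_eq (hpart v).1 hu]

theorem exists_isGoodRanking (hμ : IsPaddedDistribution G t ε w Ps) (R : Finset V) :
    ∃ r, IsGoodRanking G t ε R r := by
  induction R using Finset.strongInduction with
  | H R ih =>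
    rcases R.eq_empty_or_nonempty with rfl | hR
    · exact ⟨0, by simp [IsGoodRanking]⟩
    obtain ⟨C, hCR, hC, hCdiam, hCcost⟩ := hμ.exists_cluster hR
    obtain ⟨r, hr⟩ := ih (R \ C) (sdiff_ssubset hCR hC)
    exact ⟨_, hr.extend hCR hCdiam hCcost⟩

end IsPaddedDistribution

theorem stmt11_general [Fintype V] (G : SimpleGraph V) (t β : ℝ)
    {ι : Type*} [Fintype ι] (w : ι → ℝ) (Ps : ι → Set (Set V))
    (hw0 : ∀ i, 0 ≤ w i) (hw1 : ∑ i, w i = 1)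
    (hpart : ∀ i, w i ≠ 0 → Setoid.IsPartition (Ps i))
    (hdiam : ∀ i, w i ≠ 0 → ∀ P ∈ Ps i, ∀ u ∈ P, ∀ x ∈ P, edistLE G u x t)
    (hpad : ∀ z : V, 1 - 2 * β / t ≤
      ∑ i ∈ Finset.univ.filter (fun i => ∀ P ∈ Ps i, z ∈ P → sball G z 2 ⊆ P), w i) :
    ∃ (𝒞 : Set (Set V)) (X : Set V), IsTSPartitionR G t (2 * β / t) 𝒞 X := by
  -- `hpad` decides padding through `Fintype (Set V)` rather than classically, hence `convert`.
  have hμ : IsPaddedDistribution G t (2 * β / t) w Ps :=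
    ⟨hw0, hw1, hpart, hdiam, by convert hpad using 5; rfl⟩
  obtain ⟨r, hr⟩ := hμ.exists_isGoodRanking univ
  exact ⟨_, _, isTSPartitionR_of_isGoodRanking hr⟩

theorem stmt11 [Fintype V] (G : SimpleGraph V) (t β : ℝ) (ht : 0 < t) (hβ : 0 < β)
    (hβt : 2 * β / t ≤ 1)
    {ι : Type*} [Fintype ι] (w : ι → ℝ) (Ps : ι → Set (Set V))
    (hw0 : ∀ i, 0 ≤ w i) (hw1 : ∑ i, w i = 1)
    (hpart : ∀ i, w i ≠ 0 → Setoid.IsPartition (Ps i))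
    (hdiam : ∀ i, w i ≠ 0 → ∀ P ∈ Ps i, ∀ u ∈ P, ∀ x ∈ P, edistLE G u x t)
    (hpad : ∀ z : V, 1 - 2 * β / t ≤
      ∑ i ∈ Finset.univ.filter (fun i => ∀ P ∈ Ps i, z ∈ P → sball G z 2 ⊆ P), w i) :
    ∃ (𝒞 : Set (Set V)) (X : Set V), IsTSPartitionR G t (2 * β / t) 𝒞 X :=
  stmt11_general G t β w Ps hw0 hw1 hpart hdiam hpad
end

section
/- Let r ≥ 1 be an integer and let G = (V,E) be a connected finite simple graph with |V| > r. Then there exists a vertex set U ⊆ V such that every connected component of the subgraph of G induced on V \ U has exactly r vertices, there is at least one such component, and for every vertex v ∈ V there exists a connected component C of the induced subgraph on V \ U with dist_G(v, C) ≤ r. -/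
/-!
Choose a family `𝓕` of connected `r`-sets that are pairwise disjoint and non-adjacent, maximal
under inclusion, and let `U` be the complement of `⋃₀ 𝓕`. The components of `G[V \ U]` are then
exactly the members of `𝓕`. If a vertex `v` were at distance `> r` from all of them, a connected
`r`-set grown around `v` inside the ball of radius `r - 1` would be separated from every member,
so it could be added to `𝓕`, contradicting maximality.
-/

open SimpleGraph

variable {V : Type*}

/-- `C` is a connected component of the subgraph of `G` induced on `W`:
a maximal nonempty subset of `W` inducing a connected subgraph. -/
def IsCompOf (G : SimpleGraph V) (W : Set V) (C : Set V) : Prop :=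
  C ⊆ W ∧ C.Nonempty ∧ (G.induce C).Connected ∧
    ∀ D : Set V, C ⊆ D → D ⊆ W → (G.induce D).Connected → D = C

namespace SimpleGraph

variable {G : SimpleGraph V}

theorem Connected.exists_induce_connected_ncard_eq [Finite V] (hG : G.Connected) (v : V)
    {k : ℕ} (hk : 1 ≤ k) (hkV : k ≤ Nat.card V) :
    ∃ S : Set V, v ∈ S ∧ S.ncard = k ∧ (G.induce S).Connected ∧ ∀ u ∈ S, G.edist v u < k := by
  induction k, hk using Nat.le_induction with
  | base => exact ⟨{v}, rfl, by simp, by simp, by simp⟩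
  | succ k hk ih =>
    obtain ⟨S, hvS, hScard, hSconn, hSdist⟩ := ih (by omega)
    have hSne : S ≠ Set.univ := by
      rintro rfl
      rw [Set.ncard_univ] at hScard
      omega
    obtain ⟨y, hyS⟩ := (Set.ne_univ_iff_exists_notMem S).mp hSne
    obtain ⟨⟨⟨u, w⟩, huw⟩, -, huS, hwS⟩ := (hG v y).some.exists_boundary_dart S hvS hyS
    refine ⟨S ∪ {w}, .inl hvS, ?_, connected_induce_union hSconn.preconnected
      (by simp) huS rfl huw, ?_⟩
    · rw [Set.union_singleton, Set.ncard_insert_of_notMem hwS, hScard]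
    · rintro z (hz | rfl)
      · exact (hSdist z hz).trans (by norm_cast; omega)
      · calc G.edist v z ≤ G.edist v u + 1 :=
              G.edist_triangle.trans_eq (by rw [edist_eq_one_iff_adj.mpr huw])
          _ ≤ k := Order.add_one_le_of_lt (hSdist u huS)
          _ < ↑(k + 1) := by norm_cast; omega

theorem subset_of_induce_connected {C D : Set V} (hD : (G.induce D).Connected) {x : V}
    (hxD : x ∈ D) (hxC : x ∈ C) (hC : ∀ u ∈ C, ∀ w ∈ D, G.Adj u w → w ∈ C) : D ⊆ C := by
  have hwalk : ∀ {a b : D}, (G.induce D).Walk a b → (a : V) ∈ C → (b : V) ∈ C := by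
    intro a b p
    induction p with
    | nil => exact id
    | cons h _ ih => exact fun ha => ih (hC _ ha _ (Subtype.prop _) h)
  intro y hyD
  exact hwalk (hD ⟨x, hxD⟩ ⟨y, hyD⟩).some hxC

def Separated (G : SimpleGraph V) (S T : Set V) : Prop :=
  ∀ u ∈ S, ∀ w ∈ T, u ≠ w ∧ ¬ G.Adj u w

theorem Separated.symm {S T : Set V} (h : G.Separated S T) : G.Separated T S :=
  fun u hu w hw => ⟨(h w hw u hu).1.symm, fun huw => (h w hw u hu).2 huw.symm⟩

theorem separated_of_edist_lt_of_lt_edist {S T : Set V} {v : V} {r : ℕ∞}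
    (hS : ∀ u ∈ S, G.edist v u < r) (hT : ∀ w ∈ T, r < G.edist v w) : G.Separated S T := by
  intro u hu w hw
  have hfar : ¬ G.edist u w ≤ 1 := fun h => (hT w hw).not_ge <|
    calc G.edist v w ≤ G.edist v u + G.edist u w := G.edist_triangle
      _ ≤ G.edist v u + 1 := by gcongr
      _ ≤ r := Order.add_one_le_of_lt (hS u hu)
  rw [edist_le_one_iff_adj_or_eq] at hfar
  tauto

end SimpleGraph

theorem isCompOf_sUnion_iff {G : SimpleGraph V} {𝓕 : Set (Set V)}
    (hconn : ∀ C ∈ 𝓕, (G.induce C).Connected) (hsep : 𝓕.Pairwise G.Separated) {C : Set V} :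
    IsCompOf G (⋃₀ 𝓕) C ↔ C ∈ 𝓕 := by
  have hsub : ∀ {C D : Set V} {x : V}, (G.induce D).Connected → D ⊆ ⋃₀ 𝓕 → C ∈ 𝓕 →
      x ∈ D → x ∈ C → D ⊆ C := by
    intro C D x hD hD𝓕 hC hxD hxC
    refine subset_of_induce_connected hD hxD hxC fun u hu w hw huw => ?_
    obtain ⟨C', hC', hwC'⟩ := hD𝓕 hw
    by_contra hwC
    exact (hsep hC hC' (by rintro rfl; exact hwC hwC') u hu w hwC').2 huw
  constructor
  · rintro ⟨hC𝓕, ⟨x, hxC⟩, hCconn, hCmax⟩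
    obtain ⟨D, hD, hxD⟩ := hC𝓕 hxC
    rwa [← hCmax D (hsub hCconn hC𝓕 hD hxC hxD) (Set.subset_sUnion_of_mem hD) (hconn D hD)]
  · intro hC
    obtain ⟨x, hxC⟩ := Set.nonempty_coe_sort.mp (hconn C hC).nonempty
    exact ⟨Set.subset_sUnion_of_mem hC, ⟨x, hxC⟩, hconn C hC, fun D hCD hD𝓕 hD =>
      (hsub hD hD𝓕 hC (hCD hxC) hxC).antisymm hCD⟩

def IsConnectedPacking (G : SimpleGraph V) (r : ℕ) (𝓕 : Set (Set V)) : Prop :=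
  (∀ C ∈ 𝓕, C.ncard = r ∧ (G.induce C).Connected) ∧ 𝓕.Pairwise G.Separated

theorem IsConnectedPacking.insert {G : SimpleGraph V} {r : ℕ} {𝓕 : Set (Set V)} {S : Set V}
    (h𝓕 : IsConnectedPacking G r 𝓕) (hS : S.ncard = r ∧ (G.induce S).Connected)
    (hsep : ∀ C ∈ 𝓕, G.Separated S C) : IsConnectedPacking G r (insert S 𝓕) := by
  refine ⟨?_, Set.pairwise_insert.mpr ⟨h𝓕.2, fun C hC _ => ⟨hsep C hC, (hsep C hC).symm⟩⟩⟩
  rintro C (rfl | hC)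
  exacts [hS, h𝓕.1 C hC]

theorem exists_mem_edist_le_of_maximal [Finite V] {G : SimpleGraph V} (hG : G.Connected)
    {r : ℕ} (hr : 1 ≤ r) (hrV : r ≤ Nat.card V) {𝓕 : Set (Set V)}
    (h𝓕 : Maximal (IsConnectedPacking G r) 𝓕) (v : V) :
    ∃ C ∈ 𝓕, ∃ u ∈ C, G.edist v u ≤ r := by
  by_contra! hfar
  obtain ⟨S, hvS, hScard, hSconn, hSdist⟩ := hG.exists_induce_connected_ncard_eq v hr hrV
  have hS : S ∈ 𝓕 := h𝓕.mem_of_prop_insert <| h𝓕.prop.insert ⟨hScard, hSconn⟩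
    fun C hC => separated_of_edist_lt_of_lt_edist hSdist (hfar C hC)
  simpa using hfar S hS v hvS

theorem stmt12 [Fintype V] (G : SimpleGraph V) (hG : G.Connected) (r : ℕ) (hr : 1 ≤ r)
    (hcard : r < Fintype.card V) :
    ∃ U : Set V,
      (∀ C : Set V, IsCompOf G Uᶜ C → C.ncard = r) ∧
      (∃ C : Set V, IsCompOf G Uᶜ C) ∧
      (∀ v : V, ∃ C : Set V, IsCompOf G Uᶜ C ∧ ∃ u ∈ C, G.edist v u ≤ (r : ℕ∞)) := by
  obtain ⟨𝓕, h𝓕⟩ := (Set.toFinite {𝓕 | IsConnectedPacking G r 𝓕}).exists_maximal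
    ⟨∅, by simp [IsConnectedPacking]⟩
  have hcomp : ∀ C, IsCompOf G (⋃₀ 𝓕)ᶜᶜ C ↔ C ∈ 𝓕 := by
    rw [compl_compl]
    exact fun C => isCompOf_sUnion_iff (fun C hC => (h𝓕.prop.1 C hC).2) h𝓕.prop.2
  have hnear := exists_mem_edist_le_of_maximal hG hr
    (by rw [Nat.card_eq_fintype_card]; omega) h𝓕
  have : Nonempty V := Fintype.card_pos_iff.mp (by omega)
  refine ⟨(⋃₀ 𝓕)ᶜ, fun C hC => (h𝓕.prop.1 C ((hcomp C).1 hC)).1, ?_, fun v => ?_⟩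
  · obtain ⟨C, hC, -⟩ := hnear (Classical.arbitrary V)
    exact ⟨C, (hcomp C).2 hC⟩
  · obtain ⟨C, hC, hvC⟩ := hnear v
    exact ⟨C, (hcomp C).2 hC, hvC⟩
end

section
/- Let n ≥ 2 be an integer, let Ω be a nonempty finite set, let 𝒢 be a finite set with |𝒢| ≤ 2^{n(n−1)/2}, and let Good ⊆ 𝒢 × Ω be a relation such that for every g ∈ 𝒢, |{ ω ∈ Ω : (g, ω) ∈ Good }| ≥ (1 − 1/n)·|Ω|. Then there exist elements ω_1, …, ω_{n²} ∈ Ω such that for every g ∈ 𝒢 there exists an index i ∈ {1, …, n²} with (g, ω_i) ∈ Good. -/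
theorem stmt14 (n : ℕ) (hn : 2 ≤ n) {Ω 𝒢 : Type*} [Fintype Ω] [Nonempty Ω] [Fintype 𝒢]
    (hcard : Fintype.card 𝒢 ≤ 2 ^ (n * (n - 1) / 2))
    (Good : 𝒢 → Ω → Prop)
    (h : ∀ g : 𝒢, ((1 - 1 / (n : ℝ)) * (Fintype.card Ω : ℝ))
        ≤ ({ω : Ω | Good g ω}.ncard : ℝ)) :
    ∃ ω : Fin (n ^ 2) → Ω, ∀ g : 𝒢, ∃ i : Fin (n ^ 2), Good g (ω i) := by
  classical
  set N := n ^ 2 with hN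
  have hn0 : 0 < n := by omega
  let B : 𝒢 → Finset Ω := fun g => Finset.univ.filter (fun ω => ¬ Good g ω)
  -- key per-graph bound: |B g| * n ≤ |Ω|
  have hB : ∀ g, (B g).card * n ≤ Fintype.card Ω := by
    intro g
    have hgood : ({ω : Ω | Good g ω}.ncard : ℕ)
        = (Finset.univ.filter (fun ω => Good g ω)).card := by
      rw [Set.ncard_eq_toFinset_card']
      congr 1
      ext ω
      simp
    have hsplit : (Finset.univ.filter (fun ω => Good g ω)).card + (B g).card
        = Fintype.card Ω := by
      simpa [B] using
        Finset.card_filter_add_card_filter_not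
          (s := (Finset.univ : Finset Ω)) (p := fun ω => Good g ω)
    have h1 := h g
    rw [hgood] at h1
    have hnR : (0:ℝ) < n := by exact_mod_cast hn0
    have hinv : (1 / (n:ℝ)) * n = 1 := by field_simp
    have hsplitR : ((Finset.univ.filter (fun ω => Good g ω)).card : ℝ) + (B g).card
        = Fintype.card Ω := by exact_mod_cast hsplit
    have : ((B g).card : ℝ) * n ≤ Fintype.card Ω := by nlinarith
    exact_mod_cast this
  -- bad tuples
  let U : Finset (Fin N → Ω) :=
    Finset.univ.biUnion (fun g : 𝒢 => Fintype.piFinset (fun _ : Fin N => B g))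
  have hcardU : U.card ≤ ∑ g : 𝒢, (B g).card ^ N := by
    refine le_trans (Finset.card_biUnion_le) ?_
    refine Finset.sum_le_sum fun g _ => ?_
    rw [Fintype.card_piFinset]
    simp
  have hterm : ∀ g : 𝒢, (B g).card ^ N * n ^ N ≤ (Fintype.card Ω) ^ N := by
    intro g
    rw [← Nat.mul_pow]
    exact Nat.pow_le_pow_left (hB g) N
  have hΩ1 : 1 ≤ Fintype.card Ω := Fintype.card_pos
  have hMlt : n * (n - 1) / 2 < N := by
    have h1 : n * (n - 1) / 2 ≤ n * (n - 1) := Nat.div_le_self _ _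
    have h2 : n * (n - 1) < n * n := by
      exact Nat.mul_lt_mul_of_le_of_lt (le_refl n) (by omega) hn0
    have : N = n * n := by rw [hN, sq]
    omega
  have hstrict : Fintype.card 𝒢 < n ^ N := by
    calc Fintype.card 𝒢 ≤ 2 ^ (n * (n - 1) / 2) := hcard
      _ ≤ n ^ (n * (n - 1) / 2) := Nat.pow_le_pow_left hn _
      _ < n ^ N := Nat.pow_lt_pow_right (by omega) hMlt
  have hUlt : U.card < (Fintype.card Ω) ^ N := by
    have h1 : U.card * n ^ N ≤ Fintype.card 𝒢 * (Fintype.card Ω) ^ N := by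
      calc U.card * n ^ N ≤ (∑ g : 𝒢, (B g).card ^ N) * n ^ N :=
            Nat.mul_le_mul_right _ hcardU
        _ = ∑ g : 𝒢, (B g).card ^ N * n ^ N := by rw [Finset.sum_mul]
        _ ≤ ∑ g : 𝒢, (Fintype.card Ω) ^ N := Finset.sum_le_sum fun g _ => hterm g
        _ = Fintype.card 𝒢 * (Fintype.card Ω) ^ N := by
            rw [Finset.sum_const, Finset.card_univ, smul_eq_mul]
    have h2 : Fintype.card 𝒢 * (Fintype.card Ω) ^ N < n ^ N * (Fintype.card Ω) ^ N :=
      Nat.mul_lt_mul_of_lt_of_le hstrict (le_refl _) (by positivity)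
    have h3 : U.card * n ^ N < (Fintype.card Ω) ^ N * n ^ N := by
      calc U.card * n ^ N < n ^ N * (Fintype.card Ω) ^ N := lt_of_le_of_lt h1 h2
        _ = (Fintype.card Ω) ^ N * n ^ N := Nat.mul_comm _ _
    exact Nat.lt_of_mul_lt_mul_right h3
  have hne : U ≠ Finset.univ := by
    intro hEq
    rw [hEq, Finset.card_univ, Fintype.card_fun] at hUlt
    simp [Fintype.card_fin] at hUlt
  obtain ⟨f, hf⟩ : ∃ f : Fin N → Ω, f ∉ U := by
    by_contra hc
    push_neg at hc
    exact hne (Finset.eq_univ_iff_forall.2 hc)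
  refine ⟨f, fun g => ?_⟩
  simp only [U, Finset.mem_biUnion, Finset.mem_univ, true_and, not_exists] at hf
  have := hf g
  rw [Fintype.mem_piFinset] at this
  push_neg at this
  obtain ⟨i, hi⟩ := this
  refine ⟨i, ?_⟩
  by_contra hbad
  exact hi (by simp [B, hbad])
end
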